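/- arXiv:math/0206163 — 6 statements merged into one kernel-verified Lean document; each statement's English description precedes it below -/
import Mathlib

section
/- Let n ≥ 2 and let G be a subgroup of the symmetric group S_n acting on Ω = {1,…,n}. If 1 ≤ t ≤ n/2 and G is t-homogeneous (i.e., G acts transitively on the t-element subsets of Ω), then G is also (t−1)-homogeneous (transitive on the (t−1)-element subsets of Ω). -/
/-!
For `f` a function on subsets of an `n`-set, let `∂f(T) = ∑_{x ∈ T} f(T \ {x})` and
`∂*g(A) = ∑_{x ∉ A} g(A ∪ {x})`. These are adjoint, and `∂*∂ = ∂∂* + (|Aᶜ| - |A|)` pointwise,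
so `‖∂f‖² = ‖∂*f‖² + ∑_A (n - 2|A|) f(A)²`: on functions supported on `k`-sets with `2k < n`,
`∂` is injective. For a `G`-orbit `𝒪` of `(t-1)`-sets, the number of members of `𝒪` inside a
`t`-set is `G`-invariant, hence a constant `c` by `t`-homogeneity. Then `∂` kills
`t · 1_𝒪 - c · 1_{(t-1)-sets}`, so this function vanishes and `𝒪` consists of all `(t-1)`-sets.
-/

open Finset

variable {α 𝕜 : Type*} [DecidableEq α]

def upSum [AddCommMonoid 𝕜] (f : Finset α → 𝕜) (T : Finset α) : 𝕜 := ∑ x ∈ T, f (T.erase x)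

section

variable [Fintype α]

def downSum [AddCommMonoid 𝕜] (g : Finset α → 𝕜) (A : Finset α) : 𝕜 := ∑ x ∈ Aᶜ, g (insert x A)

theorem sum_upSum_mul [CommSemiring 𝕜] (f g : Finset α → 𝕜) :
    ∑ T, upSum f T * g T = ∑ A, f A * downSum g A := by
  simp only [upSum, downSum, sum_mul, mul_sum]
  rw [sum_sigma', sum_sigma']
  refine sum_nbij' (fun p => ⟨p.1.erase p.2, p.2⟩) (fun p => ⟨insert p.2 p.1, p.2⟩)
    ?_ ?_ ?_ ?_ ?_ <;> rintro ⟨S, x⟩ hx <;> simp_all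

theorem downSum_upSum [CommRing 𝕜] (f : Finset α → 𝕜) (A : Finset α) :
    downSum (upSum f) A = upSum (downSum f) A + (#Aᶜ - #A : 𝕜) * f A := by
  have insert_side :
      ∀ x ∈ Aᶜ, upSum f (insert x A) = f A + ∑ y ∈ A, f (insert x (A.erase y)) := by
    intro x hx
    rw [mem_compl] at hx
    rw [upSum, sum_insert hx, erase_insert hx]
    congr 1
    refine sum_congr rfl fun y hy => ?_
    rw [erase_insert_of_ne (ne_of_mem_of_not_mem hy hx).symm]
  have erase_side :
      ∀ y ∈ A, downSum f (A.erase y) = f A + ∑ x ∈ Aᶜ, f (insert x (A.erase y)) := by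
    intro y hy
    rw [downSum, compl_erase, sum_insert (by simp [hy]), insert_erase hy]
  rw [downSum, upSum, sum_congr rfl insert_side, sum_congr rfl erase_side, sum_add_distrib,
    sum_add_distrib, sum_const, sum_const, sum_comm, nsmul_eq_mul, nsmul_eq_mul]
  ring

theorem eq_zero_of_upSum_eq_zero [CommRing 𝕜] [LinearOrder 𝕜] [IsStrictOrderedRing 𝕜] {k : ℕ}
    (hk : 2 * k < Fintype.card α) {f : Finset α → 𝕜} (hf : ∀ A, #A ≠ k → f A = 0)
    (hup : ∀ T, #T = k + 1 → upSum f T = 0) : f = 0 := by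
  have hup' : upSum f = 0 := by
    funext T
    by_cases hT : #T = k + 1
    · exact hup T hT
    refine sum_eq_zero fun x hx => hf _ ?_
    have := card_pos.2 ⟨x, hx⟩
    rw [card_erase_of_mem hx]
    omega
  have weight_pos : ∀ A, f A ≠ 0 → (0 : 𝕜) < #Aᶜ - #A := by
    intro A hA
    have hcompl : #Aᶜ = Fintype.card α - k := by
      rw [card_compl, not_imp_comm.1 (hf A) hA]
    rw [sub_pos, Nat.cast_lt, hcompl, not_imp_comm.1 (hf A) hA]
    omega
  have weight_nonneg : ∀ A, 0 ≤ (#Aᶜ - #A : 𝕜) * f A ^ 2 := fun A => by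
    by_cases hA : f A = 0
    · simp [hA]
    · exact mul_nonneg (weight_pos A hA).le (sq_nonneg _)
  have norm_identity : ∑ S, downSum f S ^ 2 + ∑ A, (#Aᶜ - #A : 𝕜) * f A ^ 2 = 0 :=
    calc ∑ S, downSum f S ^ 2 + ∑ A, (#Aᶜ - #A : 𝕜) * f A ^ 2
        = ∑ A, (upSum (downSum f) A * f A + (#Aᶜ - #A : 𝕜) * f A ^ 2) := by
          rw [sum_add_distrib, sum_upSum_mul]
          simp only [sq]
      _ = ∑ A, f A * downSum (upSum f) A := by
          refine sum_congr rfl fun A _ => ?_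
          rw [downSum_upSum]
          ring
      _ = ∑ T, upSum f T * upSum f T := (sum_upSum_mul f (upSum f)).symm
      _ = 0 := by simp [hup']
  have weighted_sum_zero : ∑ A, (#Aᶜ - #A : 𝕜) * f A ^ 2 = 0 := by
    have := sum_nonneg fun S (_ : S ∈ univ) => sq_nonneg (downSum f S)
    linarith [sum_nonneg fun A (_ : A ∈ univ) => weight_nonneg A]
  funext A
  by_contra hA
  have := (sum_eq_zero_iff_of_nonneg fun A _ => weight_nonneg A).1 weighted_sum_zero A
  exact (mul_pos (weight_pos A hA) (pow_two_pos_of_ne_zero hA)).ne' (this (mem_univ A))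

theorem eq_powersetCard_univ_of_card_filter_erase_mem_eq {k : ℕ} (hk : 2 * k < Fintype.card α)
    {𝒜 : Finset (Finset α)} (h𝒜 : (𝒜 : Set (Finset α)).Sized k) (hne : 𝒜.Nonempty)
    (hcount : ∀ T T' : Finset α, #T = k + 1 → #T' = k + 1 →
      #{x ∈ T | T.erase x ∈ 𝒜} = #{x ∈ T' | T'.erase x ∈ 𝒜}) :
    𝒜 = powersetCard k univ := by
  obtain ⟨T₀, -, hT₀⟩ := exists_subset_card_eq (s := (univ : Finset α)) (n := k + 1)
    (by rw [card_univ]; omega)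
  set c := #{x ∈ T₀ | T₀.erase x ∈ 𝒜}
  let f : Finset α → ℤ := fun S =>
    (k + 1) * (if S ∈ 𝒜 then 1 else 0) - c * (if #S = k then 1 else 0)
  have hf : ∀ A, #A ≠ k → f A = 0 := fun A hA => by
    have : A ∉ 𝒜 := fun h => hA (h𝒜 h)
    simp [f, hA, this]
  have hup : ∀ T, #T = k + 1 → upSum f T = 0 := fun T hT => by
    have erase_card : ∀ x ∈ T, #(T.erase x) = k := fun x hx => by
      rw [card_erase_of_mem hx, hT, Nat.add_sub_cancel]
    simp only [upSum, f, sum_sub_distrib, ← mul_sum, sum_boole, filter_true_of_mem erase_card,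
      hcount T T₀ hT hT₀, hT]
    push_cast
    ring
  have hf0 := eq_zero_of_upSum_eq_zero hk hf hup
  obtain ⟨A, hA⟩ := hne
  have hc : (c : ℤ) = k + 1 := by
    have := congr_fun hf0 A
    simp only [f, hA, h𝒜 hA, if_true, mul_one, Pi.zero_apply] at this
    linarith
  ext B
  refine ⟨fun hB => mem_powersetCard_univ.2 (h𝒜 hB), fun hB => ?_⟩
  have := congr_fun hf0 B
  by_contra hB𝒜
  simp only [f, hB𝒜, mem_powersetCard_univ.1 hB, if_true, if_false, Pi.zero_apply] at this
  omega

end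

theorem card_filter_erase_mem_image {𝒜 : Finset (Finset α)} {g : Equiv.Perm α}
    (h𝒜 : ∀ S, S.image g ∈ 𝒜 ↔ S ∈ 𝒜) (T : Finset α) :
    #{x ∈ T.image g | (T.image g).erase x ∈ 𝒜} = #{x ∈ T | T.erase x ∈ 𝒜} := by
  rw [filter_image, card_image_of_injective _ g.injective]
  refine congrArg card (filter_congr fun x _ => ?_)
  rw [← image_erase g.injective, h𝒜]

theorem exists_mem_image_eq_image_iff {G : Subgroup (Equiv.Perm α)} {g : Equiv.Perm α}
    (hg : g ∈ G) {A S : Finset α} :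
    (∃ h ∈ G, A.image h = S.image g) ↔ ∃ h ∈ G, A.image h = S := by
  constructor
  · rintro ⟨h, hh, hS⟩
    refine ⟨g⁻¹ * h, G.mul_mem (G.inv_mem hg) hh, ?_⟩
    rw [Equiv.Perm.coe_mul, ← image_image, hS, image_image]
    simp
  · rintro ⟨h, hh, rfl⟩
    exact ⟨g * h, G.mul_mem hg hh, by rw [Equiv.Perm.coe_mul, image_image]⟩

theorem livingstone_wagner_general (n t : ℕ) (ht : 1 ≤ t) (htn : 2 * t ≤ n)
    (G : Subgroup (Equiv.Perm (Fin n)))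
    (hG : ∀ A B : Finset (Fin n), A.card = t → B.card = t →
      ∃ g ∈ G, A.image (⇑g) = B) :
    ∀ A B : Finset (Fin n), A.card = t - 1 → B.card = t - 1 →
      ∃ g ∈ G, A.image (⇑g) = B := by
  classical
  intro A B hA hB
  obtain ⟨k, rfl⟩ := Nat.exists_eq_add_of_le' ht
  rw [Nat.add_sub_cancel] at hA hB
  let orbit : Finset (Finset (Fin n)) := {S | ∃ g ∈ G, A.image g = S}
  have orbit_sized : (orbit : Set (Finset (Fin n))).Sized k := by
    rintro S hS
    obtain ⟨g, -, rfl⟩ := (mem_filter.1 hS).2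
    rw [card_image_of_injective _ g.injective, hA]
  have image_mem_orbit : ∀ g ∈ G, ∀ S, S.image g ∈ orbit ↔ S ∈ orbit := fun g hg S => by
    simp only [orbit, mem_filter, mem_univ, true_and, exists_mem_image_eq_image_iff hg]
  have orbit_eq : orbit = powersetCard k univ := by
    refine eq_powersetCard_univ_of_card_filter_erase_mem_eq (by rw [Fintype.card_fin]; omega)
      orbit_sized ⟨A, mem_filter.2 ⟨mem_univ _, 1, G.one_mem, by simp⟩⟩ fun T T' hT hT' => ?_
    obtain ⟨g, hg, rfl⟩ := hG T T' hT hT'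
    exact (card_filter_erase_mem_image (image_mem_orbit g hg) T).symm
  have hB' : B ∈ orbit := orbit_eq ▸ mem_powersetCard_univ.2 hB
  simpa [orbit] using hB'

/-- **Livingstone–Wagner.** Let `n ≥ 2` and let `G` be a subgroup of the symmetric group
on `Ω = Fin n`. If `1 ≤ t ≤ n/2` and `G` is `t`-homogeneous (transitive on `t`-element
subsets of `Ω`), then `G` is `(t-1)`-homogeneous. -/
theorem livingstone_wagner (n t : ℕ) (hn : 2 ≤ n) (ht : 1 ≤ t) (htn : 2 * t ≤ n)
    (G : Subgroup (Equiv.Perm (Fin n)))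
    (hG : ∀ A B : Finset (Fin n), A.card = t → B.card = t →
      ∃ g ∈ G, A.image (⇑g) = B) :
    ∀ A B : Finset (Fin n), A.card = t - 1 → B.card = t - 1 →
      ∃ g ∈ G, A.image (⇑g) = B :=
  livingstone_wagner_general n t ht htn G hG
end

section
/- Let n ≥ 2 and let λ and μ be partitions of n with μ ⊵ λ. If D ⊆ S_n is a λ-transitive set of permutations, then D is a μ-transitive set. -/
open scoped Pointwise

/-- `P` is an ordered set partition of `Ω = Fin n`: a list of pairwise disjoint
nonempty subsets of `Fin n` whose union is all of `Fin n`. -/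
def IsOSP (n : ℕ) (P : List (Finset (Fin n))) : Prop :=
  P.Pairwise Disjoint ∧ (∀ s ∈ P, s.Nonempty) ∧ P.foldr (· ∪ ·) ∅ = Finset.univ

/-- `l` is an integer partition of `n`: a weakly decreasing list of positive
integers summing to `n`. -/
def IsPartition (n : ℕ) (l : List ℕ) : Prop :=
  l.Pairwise (· ≥ ·) ∧ (∀ x ∈ l, 0 < x) ∧ l.sum = n

/-- The permutation `g` maps the ordered set partition `P` to `Q`, i.e. `g Pᵢ = Qᵢ`
for all `i` (in particular the lists have the same length). -/
def MapsOSP {n : ℕ} (g : Equiv.Perm (Fin n)) (P Q : List (Finset (Fin n))) : Prop :=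
  List.Forall₂ (fun s t => s.image g = t) P Q

/-- Dominance order on partitions: `Dominance l m` means `l ⊴ m`. -/
def Dominated (l m : List ℕ) : Prop :=
  ∀ j : ℕ, ((l.take j).sum ≤ (m.take j).sum)

/-- A subgroup `G ≤ S_n` is `λ`-transitive if any ordered set partition of shape `λ`
can be mapped to any other by some element of `G`. -/
def IsLamTransGroup {n : ℕ} (G : Subgroup (Equiv.Perm (Fin n))) (lam : List ℕ) : Prop :=
  ∀ P Q : List (Finset (Fin n)), IsOSP n P → IsOSP n Q →
    P.map Finset.card = lam → Q.map Finset.card = lam → ∃ g ∈ G, MapsOSP g P Q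

/-- A set `D ⊆ S_n` is `λ`-transitive if there is a constant `r` such that for any
two ordered set partitions `P, Q` of shape `λ`, exactly `r` elements of `D` map `P` to `Q`. -/
def IsLamTransSet {n : ℕ} (D : Set (Equiv.Perm (Fin n))) (lam : List ℕ) : Prop :=
  ∃ r : ℕ, ∀ P Q : List (Finset (Fin n)), IsOSP n P → IsOSP n Q →
    P.map Finset.card = lam → Q.map Finset.card = lam →
      {g ∈ D | MapsOSP g P Q}.ncard = r

/-- The Young subgroup of the ordered set partition `P`: all permutations fixing
each block of `P` setwise. -/
def YoungSubgroup {n : ℕ} (P : List (Finset (Fin n))) : Subgroup (Equiv.Perm (Fin n)) where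
  carrier := {g | ∀ s ∈ P, s.image g = s}
  one_mem' := by intro s hs; simp
  mul_mem' := by
    intro a b ha hb s hs
    have : ⇑(a * b) = ⇑a ∘ ⇑b := rfl
    rw [this, ← Finset.image_image, hb s hs, ha s hs]
  inv_mem' := by
    intro a ha s hs
    have h1 : s.image ⇑a = s := ha s hs
    conv_lhs => rw [← h1]
    rw [Finset.image_image]
    have : (⇑a⁻¹ ∘ ⇑a) = id := by
      funext x
      simp
    rw [this, Finset.image_id]


/-!
An ordered set partition of shape `λ` amounts to a colouring `Ω → ℕ` whose `k`-th colour class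
has `λ k` elements, and `g` maps `P` to `Q` exactly when the colouring of `Q` composed with `g`
is that of `P`; so transitivity can be phrased for colourings.

If `λ ⊴ μ`, then `μ` is reached from `λ` through partitions dominated by `μ` by moving single boxes
from a row `s` up to a row `i < s`: take `i` the first row where the current partition differs
from `μ` and `s + 1` the first later index where their partial sums meet again. So it suffices to
treat one move, from `c` to `c'` with `c' i = c i + 1 =: t` and `c' s + 1 = c s ≤ t`.

Fix `c'`-colourings `f`, `f'`, let `U`, `V` be the unions of their classes `i` and `s`, and let
`G ⊆ D` be the permutations that respect `f` and `f'` once these two classes are merged. Splitting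
`U` and `V` back into a `(t - 1)`-set and the rest gives `c`-colourings, so the number `N S W` of
`g ∈ G` with `g S = W` is a constant `r` on `(t - 1)`-sets. Double counting gives
`∑_{S ⊆ T} N T W = t * r` for every `(t - 1)`-set `S ⊆ U` and `t`-set `W ⊆ V`. As `#U < 2 t`, the
inclusion matrix of `(t - 1)`-sets versus `t`-sets of `U` has trivial kernel (inclusion–exclusion),
which forces `(#U - t + 1) * N T W = t * r`. The number of `g ∈ D` with `f' ∘ g = f` is
`N (f⁻¹ i) (f'⁻¹ i)`, hence independent of `f` and `f'`.
-/

open Finset Equiv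

section SupersetSums

variable {α M : Type*} [DecidableEq α]

theorem sum_sum_supersets_eq_nsmul [AddCommMonoid M] (U : Finset α) {A : Finset α} {t : ℕ}
    (hA : #A < t) (ν : Finset α → M) :
    ∑ B ∈ U.powersetCard (t - 1) with A ⊆ B, ∑ T ∈ U.powersetCard t with B ⊆ T, ν T
      = (t - #A) • ∑ T ∈ U.powersetCard t with A ⊆ T, ν T := by
  rw [sum_comm' (t' := {T ∈ U.powersetCard t | A ⊆ T})
    (s' := fun T => {B ∈ T.powersetCard (t - 1) | A ⊆ B}), smul_sum]
  · refine sum_congr rfl fun T hT => ?_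
    obtain ⟨⟨-, hT⟩, hAT⟩ := by simpa only [mem_filter, mem_powersetCard] using hT
    obtain ⟨d, hd⟩ : ∃ d, t - #A = d + 1 := ⟨t - #A - 1, by omega⟩
    rw [sum_const, card_filter_powersetCard_subset A T _ hAT (by omega), hT,
      show t - 1 - #A = d by omega, hd, Nat.choose_succ_self_right]
  · intro B T
    simp only [mem_filter, mem_powersetCard]
    constructor
    · rintro ⟨⟨⟨-, hB⟩, hAB⟩, ⟨hTU, hT⟩, hBT⟩
      exact ⟨⟨⟨hBT, hB⟩, hAB⟩, ⟨hTU, hT⟩, hAB.trans hBT⟩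
    · rintro ⟨⟨⟨hBT, hB⟩, hAB⟩, ⟨hTU, hT⟩, -⟩
      exact ⟨⟨⟨hBT.trans hTU, hB⟩, hAB⟩, ⟨hTU, hT⟩, hBT⟩

theorem sum_powerset_sdiff_zsmul_sum_supersets [AddCommGroup M] {U T₀ : Finset α} {t : ℕ}
    (hT₀U : T₀ ⊆ U) (hT₀ : #T₀ = t) (ν : Finset α → M) :
    ∑ B ∈ (U \ T₀).powerset, (-1 : ℤ) ^ #B • ∑ T ∈ U.powersetCard t with B ⊆ T, ν T = ν T₀ := by
  simp_rw [smul_sum]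
  rw [sum_comm' (t' := U.powersetCard t) (s' := fun T => ((U \ T₀) ∩ T).powerset)]
  · simp_rw [← sum_smul, sum_powerset_neg_one_pow_card]
    rw [sum_eq_single_of_mem T₀ (mem_powersetCard.2 ⟨hT₀U, hT₀⟩)]
    · simp
    · intro T hT hne
      rw [mem_powersetCard] at hT
      rw [if_neg, zero_smul]
      intro hempty
      refine hne (eq_of_subset_of_card_le (fun x hx => ?_) (by rw [hT.2, hT₀]))
      by_contra hxT₀
      exact notMem_empty x (hempty ▸ mem_inter.2 ⟨mem_sdiff.2 ⟨hT.1 hx, hxT₀⟩, hx⟩)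
  · intro B T
    simp only [mem_filter, mem_powerset, subset_inter_iff]
    tauto

theorem eq_zero_of_sum_supersets_eq_zero [AddCommGroup M] [IsAddTorsionFree M] {U : Finset α}
    {t : ℕ} (h2t : #U < 2 * t) {ν : Finset α → M}
    (hν : ∀ S ⊆ U, #S + 1 = t → ∑ T ∈ U.powersetCard t with S ⊆ T, ν T = 0)
    {T₀ : Finset α} (hT₀U : T₀ ⊆ U) (hT₀ : #T₀ = t) : ν T₀ = 0 := by
  have hsmall : ∀ A, #A < t → ∑ T ∈ U.powersetCard t with A ⊆ T, ν T = 0 := by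
    intro A hA
    have := sum_sum_supersets_eq_nsmul U hA ν
    rw [sum_eq_zero fun B hB => hν B (mem_powersetCard.1 (mem_filter.1 hB).1).1
      (by have := (mem_powersetCard.1 (mem_filter.1 hB).1).2; omega), eq_comm,
      nsmul_eq_zero_iff_right (by omega)] at this
    exact this
  rw [← sum_powerset_sdiff_zsmul_sum_supersets hT₀U hT₀ ν]
  refine sum_eq_zero fun B hB => ?_
  have hBcard : #B ≤ #U - t := by
    rw [← hT₀, ← card_sdiff_of_subset hT₀U]; exact card_le_card (mem_powerset.1 hB)
  rw [hsmall B (by omega), smul_zero]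

theorem mul_eq_of_sum_supersets_eq {U : Finset α} {t C : ℕ} (h2t : #U < 2 * t)
    (ν : Finset α → ℕ)
    (hν : ∀ S ⊆ U, #S + 1 = t → ∑ T ∈ U.powersetCard t with S ⊆ T, ν T = C)
    {T : Finset α} (hTU : T ⊆ U) (hT : #T = t) : (#U - t + 1) * ν T = C := by
  have htU : t ≤ #U := hT ▸ card_le_card hTU
  have hcount : ∀ S ⊆ U, #S + 1 = t → #{T ∈ U.powersetCard t | S ⊆ T} = #U - t + 1 := by
    intro S hSU hS
    rw [card_filter_powersetCard_subset S U t hSU (by omega), show t - #S = 1 by omega,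
      Nat.choose_one_right]
    omega
  have := eq_zero_of_sum_supersets_eq_zero h2t (ν := fun T => (#U - t + 1 : ℕ) * (ν T : ℤ) - C)
    (fun S hSU hS => by
      rw [sum_sub_distrib, ← mul_sum, sum_const, hcount S hSU hS, ← Nat.cast_sum, hν S hSU hS]
      simp) hTU hT
  exact_mod_cast sub_eq_zero.1 this

end SupersetSums

section PermCounting

variable {α : Type*} [DecidableEq α]

theorem image_perm_eq_iff (g : Perm α) (T W : Finset α) :
    T.image g = W ↔ T = W.image g.symm := by
  constructor <;> rintro rfl <;> simp [image_image]

theorem image_perm_eq_iff_forall_mem (g : Perm α) (T W : Finset α) :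
    T.image g = W ↔ ∀ x, x ∈ T ↔ g x ∈ W := by
  rw [image_perm_eq_iff, Finset.ext_iff]
  simp [Equiv.symm_apply_eq]

theorem sum_supersets_card_image_eq {G : Finset (Perm α)} {U V S W : Finset α}
    (hUV : ∀ g ∈ G, ∀ x, x ∈ U ↔ g x ∈ V) (hWV : W ⊆ V) :
    ∑ T ∈ U.powersetCard #W with S ⊆ T, #{g ∈ G | T.image (g : Perm α) = W}
      = #{g ∈ G | S.image (g : Perm α) ⊆ W} := by
  refine (sum_card_bipartiteAbove_eq_sum_card_bipartiteBelow
    (fun (T : Finset α) (g : Perm α) => T.image g = W)).trans ((card_filter _ _).trans ?_).symm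
  refine sum_congr rfl fun g hg => ?_
  simp only [bipartiteBelow, image_perm_eq_iff, filter_eq']
  have hsub : W.image g.symm ⊆ U := fun x hx => by
    obtain ⟨y, hy, rfl⟩ := mem_image.1 hx
    exact (hUV g hg _).2 (by simpa using hWV hy)
  simp [hsub, card_image_of_injective _ g.symm.injective, subset_iff, Equiv.symm_apply_eq,
    apply_ite card]

theorem sum_subsets_card_image_eq (G : Finset (Perm α)) (S W : Finset α) :
    ∑ W' ∈ W.powersetCard #S, #{g ∈ G | S.image (g : Perm α) = W'}
      = #{g ∈ G | S.image (g : Perm α) ⊆ W} := by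
  refine (sum_card_bipartiteAbove_eq_sum_card_bipartiteBelow
    (fun W' (g : Perm α) => S.image g = W')).trans ((card_filter _ _).trans ?_).symm
  refine sum_congr rfl fun g _ => ?_
  simp only [bipartiteBelow, filter_eq]
  simp [card_image_of_injective _ g.injective, apply_ite card]

theorem mul_card_image_eq {G : Finset (Perm α)} {U V : Finset α} {t r : ℕ}
    (hUV : ∀ g ∈ G, ∀ x, x ∈ U ↔ g x ∈ V) (h2t : #U < 2 * t)
    (hr : ∀ S ⊆ U, ∀ W ⊆ V, #S + 1 = t → #W + 1 = t → #{g ∈ G | S.image (g : Perm α) = W} = r)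
    {T W : Finset α} (hTU : T ⊆ U) (hWV : W ⊆ V) (hT : #T = t) (hW : #W = t) :
    (#U - t + 1) * #{g ∈ G | T.image (g : Perm α) = W} = t * r := by
  refine mul_eq_of_sum_supersets_eq h2t (fun T => #{g ∈ G | T.image (g : Perm α) = W})
    (fun S hSU hS => ?_) hTU hT
  have hr' : ∀ W' ∈ W.powersetCard #S, #{g ∈ G | S.image (g : Perm α) = W'} = r := fun W' hW' =>
    hr S hSU W' ((mem_powersetCard.1 hW').1.trans hWV) hS (by rw [(mem_powersetCard.1 hW').2, hS])
  rw [← hW, sum_supersets_card_image_eq hUV hWV, ← sum_subsets_card_image_eq,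
    sum_const_nat hr', card_powersetCard, hW, ← hS, Nat.choose_succ_self_right]

end PermCounting

section Colorings

variable {α ι : Type*} [DecidableEq ι]

def colorCount [Fintype α] (f : α → ι) (k : ι) : ℕ := #{x | f x = k}

def IsColoringTransitive [Fintype α] (D : Finset (Perm α)) (c : ι → ℕ) : Prop :=
  ∃ r, ∀ f f' : α → ι, colorCount f = c → colorCount f' = c →
    #{g ∈ D | f' ∘ (g : Perm α) = f} = r

def BoxMove (c c' : ι → ℕ) : Prop :=
  ∃ i s, i ≠ s ∧ c s ≤ c i + 1 ∧ c' + Pi.single s 1 = c + Pi.single i 1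

def mergeClass (i s k : ι) : ι := if k = s then i else k

def splitClass [DecidableEq α] (i s : ι) (F : α → ι) (T : Finset α) (x : α) : ι :=
  if x ∈ T then i else if F x = i then s else F x

variable {i s : ι}

theorem apply_eq_of_add_single_eq_add_single {c c' : ι → ℕ} (hne : i ≠ s)
    (h : c' + Pi.single s 1 = c + Pi.single i 1) :
    c' i = c i + 1 ∧ c s = c' s + 1 ∧ ∀ k, k ≠ i → k ≠ s → c' k = c k :=
  ⟨by simpa [hne] using congrFun h i, by simpa [hne.symm] using (congrFun h s).symm,
    fun k hki hks => by simpa [hki, hks] using congrFun h k⟩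

theorem mergeClass_ne (hne : i ≠ s) (k : ι) : mergeClass i s k ≠ s := by
  unfold mergeClass; split_ifs <;> assumption

theorem mergeClass_eq_left_iff {k : ι} : mergeClass i s k = i ↔ k = i ∨ k = s := by
  unfold mergeClass; split_ifs <;> tauto

section Split

variable [DecidableEq α]

theorem splitClass_eq_left_iff (hne : i ≠ s) {F : α → ι} {T : Finset α} {x : α} :
    splitClass i s F T x = i ↔ x ∈ T := by
  unfold splitClass; split_ifs <;> simp_all [hne.symm]

theorem mergeClass_splitClass {F : α → ι} (hF : ∀ x, F x ≠ s) {T : Finset α}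
    (hT : ∀ x ∈ T, F x = i) (x : α) : mergeClass i s (splitClass i s F T x) = F x := by
  unfold mergeClass splitClass; split_ifs <;> simp_all

theorem splitClass_comp_perm_eq_iff (hne : i ≠ s) {F F' : α → ι} (hF : ∀ x, F x ≠ s)
    (hF' : ∀ x, F' x ≠ s) {T W : Finset α} (hT : ∀ x ∈ T, F x = i) (hW : ∀ x ∈ W, F' x = i)
    (g : Perm α) :
    splitClass i s F' W ∘ g = splitClass i s F T ↔ F' ∘ g = F ∧ T.image g = W := by
  rw [image_perm_eq_iff_forall_mem]
  constructor
  · intro h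
    refine ⟨funext fun x => ?_, fun x => ?_⟩
    · simpa only [Function.comp_apply, mergeClass_splitClass hF' hW,
        mergeClass_splitClass hF hT] using congrArg (mergeClass i s) (congrFun h x)
    · rw [← splitClass_eq_left_iff hne (F := F) (T := T),
        ← splitClass_eq_left_iff hne (F := F') (T := W), ← congrFun h x, Function.comp_apply]
  · rintro ⟨rfl, hTW⟩
    funext x
    simp [splitClass, ← hTW x]

theorem splitClass_mergeClass_fiber [Fintype α] (f : α → ι) :
    splitClass i s (mergeClass i s ∘ f) {x | f x = i} = f := by
  funext x; unfold splitClass mergeClass; split_ifs <;> simp_all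

end Split

variable [Fintype α]

theorem card_mergeClass_eq_left (hne : i ≠ s) (f : α → ι) :
    #{x | mergeClass i s (f x) = i} = colorCount f i + colorCount f s := by
  classical
  rw [colorCount, colorCount, ← card_union_of_disjoint (disjoint_filter.2 fun x _ h h' =>
    hne (h.symm.trans h')), ← filter_or]
  simp only [mergeClass_eq_left_iff]

theorem colorCount_splitClass [DecidableEq α] (hne : i ≠ s) {c c' : ι → ℕ}
    (hcc' : c' + Pi.single s 1 = c + Pi.single i 1) {f : α → ι} (hf : colorCount f = c')
    {S : Finset α} (hSU : ∀ x ∈ S, mergeClass i s (f x) = i) (hS : #S + 1 = c' i) :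
    colorCount (splitClass i s (mergeClass i s ∘ f) S) = c := by
  obtain ⟨hci, hcs, hc⟩ := apply_eq_of_add_single_eq_add_single hne hcc'
  funext k
  unfold colorCount
  by_cases hki : k = i
  · subst hki
    simp only [splitClass_eq_left_iff hne, filter_mem_eq_inter, univ_inter]
    omega
  by_cases hks : k = s
  · subst hks
    have : filter (fun x => splitClass i k (mergeClass i k ∘ f) S x = k) univ
        = filter (fun x => mergeClass i k (f x) = i) univ \ S := by
      ext x
      simp only [mem_filter, mem_univ, true_and, mem_sdiff]
      unfold splitClass
      split_ifs <;> simp_all [mergeClass_ne hne]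
    rw [this, card_sdiff_of_subset (fun x hx => by simpa using hSU x hx),
      card_mergeClass_eq_left hne, hf]
    omega
  · have : filter (fun x => splitClass i s (mergeClass i s ∘ f) S x = k) univ
        = filter (fun x => f x = k) univ := by
      ext x
      have hxS : x ∈ S → f x = i ∨ f x = s := fun hx => mergeClass_eq_left_iff.1 (hSU x hx)
      simp only [mem_filter, mem_univ, true_and]
      unfold splitClass mergeClass
      split_ifs <;> grind
    rw [this, ← colorCount, hf, hc k hki hks]

end Colorings

section Step

variable {α ι : Type*} [Fintype α] [DecidableEq α] [DecidableEq ι] {D : Finset (Perm α)}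
  {c c' : ι → ℕ}

theorem mul_card_comp_eq_of_add_single_eq {r : ℕ} (hr : ∀ f f' : α → ι, colorCount f = c →
      colorCount f' = c → #{g ∈ D | f' ∘ (g : Perm α) = f} = r)
    {i s : ι} (hne : i ≠ s) (hle : c s ≤ c i + 1) (hcc' : c' + Pi.single s 1 = c + Pi.single i 1)
    {f f' : α → ι} (hf : colorCount f = c') (hf' : colorCount f' = c') :
    (c' s + 1) * #{g ∈ D | f' ∘ (g : Perm α) = f} = c' i * r := by
  obtain ⟨hci, hcs, -⟩ := apply_eq_of_add_single_eq_add_single hne hcc'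
  set U : Finset α := {x | mergeClass i s (f x) = i}
  set V : Finset α := {y | mergeClass i s (f' y) = i}
  set G := {g ∈ D | (mergeClass i s ∘ f') ∘ (g : Perm α) = mergeClass i s ∘ f}
  have hsplit : ∀ T ⊆ U, ∀ W ⊆ V, {g ∈ D | splitClass i s (mergeClass i s ∘ f') W ∘ (g : Perm α)
      = splitClass i s (mergeClass i s ∘ f) T} = {g ∈ G | T.image (g : Perm α) = W} := by
    intro T hTU W hWV
    rw [filter_filter]
    exact filter_congr fun g _ => splitClass_comp_perm_eq_iff hne (fun x => mergeClass_ne hne _)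
      (fun x => mergeClass_ne hne _) (fun x hx => (mem_filter.1 (hTU hx)).2)
      (fun x hx => (mem_filter.1 (hWV hx)).2) g
  have hUV : ∀ g ∈ G, ∀ x, x ∈ U ↔ g x ∈ V := fun g hg x => by
    have := congrFun (mem_filter.1 hg).2 x
    simp only [Function.comp_apply] at this
    simp [U, V, this]
  have hr' : ∀ S ⊆ U, ∀ W ⊆ V, #S + 1 = c' i → #W + 1 = c' i →
      #{g ∈ G | S.image (g : Perm α) = W} = r := by
    intro S hSU W hWV hS hW
    rw [← hsplit S hSU W hWV]
    exact hr _ _ (colorCount_splitClass hne hcc' hf (fun x hx => (mem_filter.1 (hSU hx)).2) hS)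
      (colorCount_splitClass hne hcc' hf' (fun x hx => (mem_filter.1 (hWV hx)).2) hW)
  have hfib : filter (f · = i) univ ⊆ U := fun x hx => by simp_all [U, mergeClass]
  have hfib' : filter (f' · = i) univ ⊆ V := fun y hy => by simp_all [V, mergeClass]
  have key := mul_card_image_eq hUV (by rw [card_mergeClass_eq_left hne, hf]; omega) hr' hfib
    hfib' (by rw [← colorCount, hf]) (by rw [← colorCount, hf'])
  rwa [← hsplit _ hfib _ hfib', splitClass_mergeClass_fiber, splitClass_mergeClass_fiber,
    card_mergeClass_eq_left hne, hf, show c' i + c' s - c' i + 1 = c' s + 1 by omega] at key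

theorem IsColoringTransitive.of_boxMove (hD : IsColoringTransitive D c) (hmove : BoxMove c c') :
    IsColoringTransitive D c' := by
  obtain ⟨r, hr⟩ := hD
  obtain ⟨i, s, hne, hle, hcc'⟩ := hmove
  refine ⟨c' i * r / (c' s + 1), fun f f' hf hf' => ?_⟩
  rw [← mul_card_comp_eq_of_add_single_eq hr hne hle hcc' hf hf',
    Nat.mul_div_cancel_left _ (Nat.succ_pos _)]

theorem IsColoringTransitive.of_reflTransGen (hD : IsColoringTransitive D c)
    (h : Relation.ReflTransGen BoxMove c c') : IsColoringTransitive D c' := by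
  induction h with
  | refl => exact hD
  | tail _ hmove ih => exact ih.of_boxMove hmove

end Step

section OrderedSetPartitions

variable {n : ℕ}

def IsBlockColoring (P : List (Finset (Fin n))) (f : Fin n → ℕ) : Prop :=
  ∀ k x, x ∈ P.getD k ∅ ↔ f x = k

theorem mem_foldr_union_iff {P : List (Finset (Fin n))} {x : Fin n} :
    x ∈ P.foldr (· ∪ ·) ∅ ↔ ∃ s ∈ P, x ∈ s := by
  induction P <;> simp [*]

theorem lt_length_of_mem_getD {P : List (Finset (Fin n))} {k : ℕ} {x : Fin n}
    (hx : x ∈ P.getD k ∅) : k < P.length := by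
  by_contra! hk
  rw [List.getD_eq_default _ _ hk] at hx
  exact notMem_empty x hx

theorem IsOSP.exists_isBlockColoring {P : List (Finset (Fin n))} (hP : IsOSP n P) :
    ∃ f, IsBlockColoring P f := by
  refine ⟨fun x => P.findIdx fun s => decide (x ∈ s), fun k x => ⟨fun hx => ?_, fun hx => ?_⟩⟩
  · have hk := lt_length_of_mem_getD hx
    rw [List.getD_eq_getElem _ _ hk] at hx
    refine (List.findIdx_eq hk).2 ⟨by simpa using hx, fun j hj => ?_⟩
    have := List.pairwise_iff_getElem.1 hP.1 j k (by omega) hk hj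
    simpa using disjoint_right.1 this hx
  · have hcover : ∃ s ∈ P, x ∈ s := mem_foldr_union_iff.1 (hP.2.2 ▸ mem_univ x)
    have hlt := List.findIdx_lt_length_of_exists (p := fun s => decide (x ∈ s))
      (by simpa using hcover)
    have hmem := List.findIdx_getElem (w := hlt)
    simp only [decide_eq_true_eq] at hmem
    simp only at hx
    rw [List.getD_eq_getElem _ _ (hx ▸ hlt)]
    simpa [hx] using hmem

theorem IsBlockColoring.isOSP {P : List (Finset (Fin n))} {f : Fin n → ℕ}
    (hf : IsBlockColoring P f) (hne : ∀ s ∈ P, s.Nonempty) : IsOSP n P := by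
  refine ⟨List.pairwise_iff_getElem.2 fun j k hj hk hjk => disjoint_left.2 fun x hxj hxk => ?_,
    hne, eq_univ_of_forall fun x => mem_foldr_union_iff.2 ?_⟩
  · rw [← List.getD_eq_getElem _ ∅, hf] at hxj hxk
    omega
  · have hx : x ∈ P.getD (f x) ∅ := (hf _ x).2 rfl
    have hlt := lt_length_of_mem_getD hx
    exact ⟨_, List.getElem_mem hlt, by rwa [List.getD_eq_getElem _ _ hlt] at hx⟩

theorem IsBlockColoring.mapsOSP_iff {P Q : List (Finset (Fin n))} {f f' : Fin n → ℕ}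
    (hf : IsBlockColoring P f) (hf' : IsBlockColoring Q f') (hlen : P.length = Q.length)
    (g : Perm (Fin n)) : MapsOSP g P Q ↔ f' ∘ g = f := by
  have hblocks : MapsOSP g P Q ↔ ∀ k, (P.getD k ∅).image g = Q.getD k ∅ := by
    rw [MapsOSP, List.forall₂_iff_get]
    refine ⟨fun ⟨_, h⟩ k => ?_, fun h => ⟨hlen, fun k hP hQ => ?_⟩⟩
    · rcases lt_or_ge k P.length with hk | hk
      · rw [List.getD_eq_getElem _ _ hk, List.getD_eq_getElem _ _ (hlen ▸ hk)]
        exact h k hk (hlen ▸ hk)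
      · rw [List.getD_eq_default _ _ hk, List.getD_eq_default _ _ (hlen ▸ hk), image_empty]
    · have := h k
      rwa [List.getD_eq_getElem _ _ hP, List.getD_eq_getElem _ _ hQ] at this
  unfold IsBlockColoring at hf hf'
  simp only [hblocks, image_perm_eq_iff_forall_mem, hf, hf']
  refine ⟨fun h => funext fun x => (h (f x) x).1 rfl, fun h k x => ?_⟩
  rw [← h, Function.comp_apply]

theorem IsBlockColoring.colorCount_eq {P : List (Finset (Fin n))} {f : Fin n → ℕ}
    (hf : IsBlockColoring P f) : colorCount f = ((P.map card).getD · 0) := by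
  funext k
  rw [← card_empty, List.getD_map, colorCount]
  congr 1
  ext x
  rw [mem_filter, hf k x]
  simp

theorem exists_isBlockColoring_of_colorCount {lam : List ℕ} (hlam : ∀ x ∈ lam, 0 < x)
    {f : Fin n → ℕ} (hf : colorCount f = (lam.getD · 0)) :
    ∃ P : List (Finset (Fin n)),
      IsBlockColoring P f ∧ P.map card = lam ∧ ∀ s ∈ P, s.Nonempty := by
  have hcard : ∀ k, #{x | f x = k} = lam.getD k 0 := fun k => congrFun hf k
  refine ⟨(List.range lam.length).map fun k => univ.filter (f · = k), fun k x => ?_, ?_, ?_⟩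
  · rcases lt_or_ge k lam.length with hk | hk
    · rw [List.getD_eq_getElem _ _ (by simpa using hk)]
      simp
    · rw [List.getD_eq_default _ _ (by simpa using hk)]
      have : 0 < lam.getD (f x) 0 := hcard (f x) ▸ card_pos.2 ⟨x, by simp⟩
      have : f x < lam.length := by
        by_contra! h; rw [List.getD_eq_default _ _ h] at this; omega
      simp only [notMem_empty, false_iff]
      omega
  · refine List.ext_getElem (by simp) fun k hk _ => ?_
    simp only [List.map_map, List.getElem_map, List.getElem_range, Function.comp_apply, hcard]
    exact List.getD_eq_getElem _ _ _
  · simp only [List.mem_map, List.mem_range, forall_exists_index, and_imp]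
    rintro _ k hk rfl
    rw [← card_pos, hcard, List.getD_eq_getElem _ _ hk]
    exact hlam _ (List.getElem_mem hk)

theorem isLamTransSet_iff {lam : List ℕ} (hlam : ∀ x ∈ lam, 0 < x)
    (D : Set (Perm (Fin n))) :
    IsLamTransSet D lam ↔ IsColoringTransitive (Set.toFinite D).toFinset (lam.getD · 0) := by
  have hcount : ∀ {P Q f f'}, IsBlockColoring P f → IsBlockColoring Q f' →
      P.length = Q.length → {g ∈ D | MapsOSP g P Q}.ncard
        = #{g ∈ (Set.toFinite D).toFinset | f' ∘ (g : Perm (Fin n)) = f} := by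
    intro P Q f f' hf hf' hlen
    rw [← Set.ncard_coe_finset]
    congr 1
    ext g
    simp [hf.mapsOSP_iff hf' hlen]
  constructor
  · rintro ⟨r, hr⟩
    refine ⟨r, fun f f' hf hf' => ?_⟩
    obtain ⟨P, hPf, hPs, hPne⟩ := exists_isBlockColoring_of_colorCount hlam hf
    obtain ⟨Q, hQf', hQs, hQne⟩ := exists_isBlockColoring_of_colorCount hlam hf'
    rw [← hcount hPf hQf' (by rw [← List.length_map card, hPs, ← hQs, List.length_map])]
    exact hr P Q (hPf.isOSP hPne) (hQf'.isOSP hQne) hPs hQs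
  · rintro ⟨r, hr⟩
    refine ⟨r, fun P Q hP hQ hPs hQs => ?_⟩
    obtain ⟨f, hf⟩ := hP.exists_isBlockColoring
    obtain ⟨f', hf'⟩ := hQ.exists_isBlockColoring
    rw [hcount hf hf' (by rw [← List.length_map card, hPs, ← hQs, List.length_map])]
    exact hr f f' (hPs ▸ hf.colorCount_eq) (hQs ▸ hf'.colorCount_eq)

end OrderedSetPartitions

section Dominance

open Relation

def partialSum (a : ℕ → ℕ) (j : ℕ) : ℕ := ∑ k ∈ range j, a k

theorem partialSum_succ (a : ℕ → ℕ) (j : ℕ) : partialSum a (j + 1) = partialSum a j + a j :=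
  sum_range_succ a j

theorem partialSum_add_ite_of_add_single_eq {a a' : ℕ → ℕ} {i s : ℕ}
    (h : a' + Pi.single s 1 = a + Pi.single i 1) (j : ℕ) :
    partialSum a' j + (if s < j then 1 else 0) = partialSum a j + (if i < j then 1 else 0) := by
  have := congrArg (fun c => ∑ k ∈ range j, c k) h
  simpa [partialSum, sum_add_distrib, Pi.single_apply] using this

theorem exists_rows_of_dominated {a b : ℕ → ℕ} (hb : Antitone b)
    (hdom : ∀ j, partialSum a j ≤ partialSum b j) {N : ℕ}
    (hN : ∀ j ≥ N, partialSum a j = partialSum b j) (hab : a ≠ b) :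
    ∃ i s, i < s ∧ s < N ∧ a i < b i ∧ (∀ k < i, a k = b k) ∧ a (s + 1) < a s ∧
      ∀ j, i < j → j ≤ s → partialSum a j < partialSum b j := by
  have hex : ∃ k, a k ≠ b k := Function.ne_iff.1 hab
  set i := Nat.find hex
  have hbefore : ∀ k < i, a k = b k := fun k hk => not_not.1 (Nat.find_min hex hk)
  have hSi : partialSum a i = partialSum b i :=
    sum_congr rfl fun k hk => hbefore k (mem_range.1 hk)
  have hai : a i < b i := by
    have := hdom (i + 1); rw [partialSum_succ, partialSum_succ, hSi] at this
    exact lt_of_le_of_ne (by omega) (Nat.find_spec hex)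
  have hiN : i < N := by
    by_contra! hiN
    have h1 := hN (i + 1) (by omega); rw [partialSum_succ, partialSum_succ, hN i hiN] at h1
    omega
  have hk0ex : ∃ j, i < j ∧ partialSum a j = partialSum b j := ⟨N, hiN, hN N le_rfl⟩
  set k0 := Nat.find hk0ex
  obtain ⟨hik0, hk0⟩ : i < k0 ∧ partialSum a k0 = partialSum b k0 := Nat.find_spec hk0ex
  have hk0N : k0 ≤ N := Nat.find_min' hk0ex ⟨hiN, hN N le_rfl⟩
  have hstrict : ∀ j, i < j → j < k0 → partialSum a j < partialSum b j := fun j hij hjk =>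
    lt_of_le_of_ne (hdom j) fun h => Nat.find_min hk0ex hjk ⟨hij, h⟩
  have hik0' : i + 1 < k0 := by
    refine lt_of_le_of_ne hik0 fun h => ?_
    rw [← h, partialSum_succ, partialSum_succ, hSi] at hk0
    omega
  clear_value k0
  obtain ⟨s, rfl⟩ : ∃ s, k0 = s + 1 := ⟨k0 - 1, by omega⟩
  have has : b s < a s := by
    have := hstrict s (by omega) (by omega)
    rw [partialSum_succ, partialSum_succ] at hk0
    omega
  have has1 : a (s + 1) ≤ b (s + 1) := by
    have := hdom (s + 2); rw [partialSum_succ a (s + 1), partialSum_succ b (s + 1), hk0] at this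
    omega
  exact ⟨i, s, by omega, by omega, hai, hbefore, by have := hb (show s ≤ s + 1 by omega); omega,
    fun j hij hjs => hstrict j hij (by omega)⟩

theorem exists_boxMove_of_dominated {a b : ℕ → ℕ} (ha : Antitone a) (hb : Antitone b)
    (hdom : ∀ j, partialSum a j ≤ partialSum b j) {N : ℕ}
    (hN : ∀ j ≥ N, partialSum a j = partialSum b j) (hab : a ≠ b) :
    ∃ a', BoxMove a a' ∧ Antitone a' ∧ (∀ j, partialSum a' j ≤ partialSum b j) ∧
      (∀ j ≥ N, partialSum a' j = partialSum b j) ∧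
      ∑ j ∈ range N, (partialSum b j - partialSum a' j)
        < ∑ j ∈ range N, (partialSum b j - partialSum a j) := by
  obtain ⟨i, s, his, hsN, hai, hbefore, has, hstrict⟩ := exists_rows_of_dominated hb hdom hN hab
  set a' : ℕ → ℕ := fun k => if k = i then a i + 1 else if k = s then a s - 1 else a k
  have hasi : a s ≤ a i := ha his.le
  have hmove : a' + Pi.single s 1 = a + Pi.single i 1 := by
    funext k
    simp only [a', Pi.add_apply, Pi.single_apply]
    split_ifs <;> subst_vars <;> omega
  have hS : ∀ j, partialSum a' j = partialSum a j + if i < j ∧ j ≤ s then 1 else 0 := by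
    intro j
    have := partialSum_add_ite_of_add_single_eq hmove j
    split_ifs at this ⊢ <;> omega
  have hprev : ∀ k, k + 1 = i → a i + 1 ≤ a k := fun k hk => by
    rw [hbefore k (by omega)]; have := hb (show k ≤ i by omega); omega
  refine ⟨a', ⟨i, s, his.ne, by omega, hmove⟩, antitone_nat_of_succ_le fun k => ?_,
    fun j => ?_, fun j hj => ?_, sum_lt_sum (fun j _ => ?_) ⟨s, mem_range.2 hsN, ?_⟩⟩
  · have := ha (show k ≤ k + 1 by omega); have := hprev k
    simp only [a']
    split_ifs <;> subst_vars <;> omega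
  · rw [hS]; split_ifs with h
    · exact hstrict j h.1 h.2
    · simpa using hdom j
  · rw [hS, if_neg (by omega), add_zero, hN j hj]
  · rw [hS]; omega
  · rw [hS, if_pos ⟨his, le_rfl⟩]
    have := hstrict s his le_rfl
    omega

theorem reflTransGen_boxMove_of_dominated {a b : ℕ → ℕ} (ha : Antitone a) (hb : Antitone b)
    (hdom : ∀ j, partialSum a j ≤ partialSum b j) {N : ℕ}
    (hN : ∀ j ≥ N, partialSum a j = partialSum b j) : ReflTransGen BoxMove a b := by
  induction h : ∑ j ∈ range N, (partialSum b j - partialSum a j) using Nat.strong_induction_on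
    generalizing a with
  | _ d ih =>
    by_cases hab : a = b
    · rw [hab]
    obtain ⟨a', hmove, ha', hdom', hN', hlt⟩ := exists_boxMove_of_dominated ha hb hdom hN hab
    exact ReflTransGen.head hmove (ih _ (h ▸ hlt) ha' hdom' hN' rfl)

end Dominance

section Partitions

theorem partialSum_getD (l : List ℕ) (j : ℕ) : partialSum (l.getD · 0) j = (l.take j).sum := by
  induction j with
  | zero => simp [partialSum]
  | succ j ih =>
    rw [partialSum_succ, ih, List.take_add_one, List.sum_append, List.getD_eq_getElem?_getD]
    cases l[j]? <;> simp

theorem IsPartition.antitone_getD {n : ℕ} {lam : List ℕ} (h : IsPartition n lam) :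
    Antitone (lam.getD · 0) := by
  intro a b hab
  dsimp only
  rcases lt_or_ge b lam.length with hb | hb
  · rw [List.getD_eq_getElem _ _ hb, List.getD_eq_getElem _ _ (by omega)]
    exact h.1.rel_get_of_le hab
  · rw [List.getD_eq_default _ _ hb]; exact Nat.zero_le _

theorem IsPartition.partialSum_getD_of_le {n : ℕ} {lam : List ℕ} (h : IsPartition n lam) {j : ℕ}
    (hj : n ≤ j) : partialSum (lam.getD · 0) j = n := by
  rw [partialSum_getD, List.take_of_length_le, h.2.2]
  exact (List.length_le_sum_of_one_le _ h.2.1).trans (h.2.2 ▸ hj)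

end Partitions

theorem lamTransSet_of_dominated_general (n : ℕ) (lam mu : List ℕ)
    (hlam : IsPartition n lam) (hmu : IsPartition n mu) (hdom : Dominated lam mu)
    (D : Set (Equiv.Perm (Fin n))) (hD : IsLamTransSet D lam) :
    IsLamTransSet D mu := by
  have hmoves : Relation.ReflTransGen BoxMove (lam.getD · 0) (mu.getD · 0) :=
    reflTransGen_boxMove_of_dominated hlam.antitone_getD hmu.antitone_getD
      (fun j => by simpa only [partialSum_getD] using hdom j)
      (fun j hj => by rw [hlam.partialSum_getD_of_le hj, hmu.partialSum_getD_of_le hj])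
  rw [isLamTransSet_iff hlam.2.1] at hD
  rw [isLamTransSet_iff hmu.2.1]
  exact hD.of_reflTransGen hmoves

/-- If `D ⊆ S_n` is a `λ`-transitive set and `μ ⊵ λ`, then `D` is a `μ`-transitive set. -/
theorem lamTransSet_of_dominated (n : ℕ) (hn : 2 ≤ n) (lam mu : List ℕ)
    (hlam : IsPartition n lam) (hmu : IsPartition n mu) (hdom : Dominated lam mu)
    (D : Set (Equiv.Perm (Fin n))) (hD : IsLamTransSet D lam) :
    IsLamTransSet D mu :=
  lamTransSet_of_dominated_general n lam mu hlam hmu hdom D hD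
end

section
/- Let n ≥ 2, let λ be a partition of n, let D ⊆ S_n with indicator vector x ∈ ℝ^{S_n}, and let W_λ ⊆ ℝ^{S_n} be the span of the indicator vectors of all left cosets of Young subgroups of shape λ. Then D is λ-transitive if and only if ⟨x, v⟩ = 0 for every v ∈ W_λ that is orthogonal to the all-ones vector; equivalently, the orthogonal projection of x onto W_λ is a scalar multiple of the all-ones vector. -/
open scoped Pointwise

/-- `W_λ`: the subspace of `ℝ^{S_n}` spanned by the indicator vectors of all left cosets
`a • Y_P` of Young subgroups of shape `λ`. -/
def Wspace (n : ℕ) (nu : List ℕ) : Submodule ℝ (Equiv.Perm (Fin n) → ℝ) :=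
  Submodule.span ℝ
    {v | ∃ (a : Equiv.Perm (Fin n)) (P : List (Finset (Fin n))),
      IsOSP n P ∧ P.map Finset.card = nu ∧
      v = Set.indicator (a • (YoungSubgroup P : Set (Equiv.Perm (Fin n)))) (fun _ => (1 : ℝ))}

/-!
The permutations mapping an ordered set partition `P` to `Q` form a left coset `a • Y_P`, and every
left coset `a • Y_P` arises this way (with `Q = a P`); since `S_n` acts transitively on ordered set
partitions of a given shape, `D` is `λ`-transitive iff the functional `ℓ = ⟨x, ·⟩` takes the same
value on all generators `1_{a • Y_P}` of `W_λ`. All these cosets have the same size, so the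
functional `μ = ⟨1, ·⟩` is a nonzero constant on the generators, and a functional is constant on a
set `S` on which `μ` is a nonzero constant exactly when it vanishes on `span S ⊓ ker μ`.
-/

open Equiv Finset

theorem Submodule.span_inf_ker_le_ker_iff {K M : Type*} [Field K] [AddCommGroup M] [Module K M]
    {S : Set M} (ℓ μ : M →ₗ[K] K) (hμ : ∀ v ∈ S, ∀ w ∈ S, μ v = μ w) (hμ0 : ∀ v ∈ S, μ v ≠ 0) :
    span K S ⊓ LinearMap.ker μ ≤ LinearMap.ker ℓ ↔ ∀ v ∈ S, ∀ w ∈ S, ℓ v = ℓ w := by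
  constructor
  · intro h v hv w hw
    have hvw : v - w ∈ span K S ⊓ LinearMap.ker μ :=
      ⟨sub_mem (subset_span hv) (subset_span hw), by simp [hμ v hv w hw]⟩
    simpa [sub_eq_zero] using h hvw
  · intro hℓ
    rcases S.eq_empty_or_nonempty with rfl | ⟨w, hw⟩
    · simp
    have hprop : span K S ≤ LinearMap.ker (μ w • ℓ - ℓ w • μ) :=
      span_le.2 fun v hv => by simp [hℓ v hv w hw, hμ v hv w hw, mul_comm]
    rintro v ⟨hvS, hvμ : μ v = 0⟩
    have hv : μ w * ℓ v - ℓ w * μ v = 0 := hprop hvS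
    simpa [hvμ, hμ0 w hw] using hv

theorem Equiv.Perm.exists_comp_eq_of_card_fiber_eq {α ι : Type*} [Fintype α] [DecidableEq ι]
    {f g : α → ι} (h : ∀ i, #{x | f x = i} = #{x | g x = i}) :
    ∃ σ : Perm α, ∀ x, g (σ x) = f x :=
  ⟨ofFiberEquiv fun i => Fintype.equivOfCardEq (by simpa only [Fintype.card_subtype] using h i),
    ofFiberEquiv_map _⟩

theorem List.mem_foldr_union {α : Type*} [DecidableEq α] (P : List (Finset α)) (x : α) :
    x ∈ P.foldr (· ∪ ·) ∅ ↔ ∃ s ∈ P, x ∈ s := by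
  induction P with
  | nil => simp
  | cons s P ih => simp [ih]

theorem Set.sum_indicator_one_eq_ncard {α R : Type*} [Fintype α] [AddCommMonoidWithOne R]
    (s : Set α) : ∑ x, s.indicator (fun _ => (1 : R)) x = s.ncard := by
  classical
  simp [Set.indicator_apply, Finset.sum_boole, Set.ncard_eq_toFinset_card']

theorem Set.indicator_one_dotProduct_indicator_one {α R : Type*} [Fintype α] [NonAssocSemiring R]
    (s t : Set α) : s.indicator (fun _ => (1 : R)) ⬝ᵥ t.indicator (fun _ => 1) = (s ∩ t).ncard := by
  simp_rw [dotProduct, ← Set.inter_indicator_mul, one_mul]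
  exact Set.sum_indicator_one_eq_ncard _

section OrderedSetPartition

variable {n : ℕ} {P Q R : List (Finset (Fin n))} {a b g : Perm (Fin n)}

theorem mapsOSP_iff_map_eq : MapsOSP g P Q ↔ P.map (Finset.image g) = Q := by
  rw [MapsOSP, ← List.forall₂_eq_eq_eq, List.forall₂_map_left_iff]

theorem mapsOSP_map_image (g : Perm (Fin n)) (P : List (Finset (Fin n))) :
    MapsOSP g P (P.map (Finset.image g)) :=
  mapsOSP_iff_map_eq.2 rfl

theorem MapsOSP.mul (ha : MapsOSP a P Q) (hb : MapsOSP b Q R) : MapsOSP (b * a) P R := by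
  rw [mapsOSP_iff_map_eq] at *
  simp [← ha, ← hb, List.map_map, Function.comp_def, Finset.image_image, Perm.coe_mul]

theorem MapsOSP.inv (ha : MapsOSP a P Q) : MapsOSP a⁻¹ Q P := by
  rw [mapsOSP_iff_map_eq] at *
  simp [← ha, List.map_map, Function.comp_def, Finset.image_image]

theorem mem_youngSubgroup_iff_mapsOSP : g ∈ YoungSubgroup P ↔ MapsOSP g P P :=
  List.forall₂_same.symm

theorem setOf_mapsOSP_eq_smul (ha : MapsOSP a P Q) :
    {g | MapsOSP g P Q} = a • (YoungSubgroup P : Set (Perm (Fin n))) := by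
  ext g
  rw [Set.mem_smul_set_iff_inv_smul_mem, smul_eq_mul, SetLike.mem_coe,
    mem_youngSubgroup_iff_mapsOSP]
  refine ⟨fun hg => hg.mul ha.inv, fun hg => ?_⟩
  simpa using hg.mul ha

theorem ncard_youngSubgroup_eq (hb : MapsOSP b P Q) :
    (YoungSubgroup P : Set (Perm (Fin n))).ncard = (YoungSubgroup Q : Set (Perm (Fin n))).ncard := by
  have hinv : {g | MapsOSP g P Q}⁻¹ = {g | MapsOSP g Q P} := by
    ext g
    exact ⟨fun hg => by simpa using hg.inv, fun hg => hg.inv⟩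
  rw [← Set.ncard_smul_set b, ← setOf_mapsOSP_eq_smul hb, ← Set.ncard_inv, hinv,
    setOf_mapsOSP_eq_smul hb.inv, Set.ncard_smul_set]

theorem IsOSP.exists_mem (hP : IsOSP n P) (x : Fin n) : ∃ s ∈ P, x ∈ s :=
  (List.mem_foldr_union P x).1 (hP.2.2 ▸ Finset.mem_univ x)

theorem IsOSP.map_image (hP : IsOSP n P) (g : Perm (Fin n)) : IsOSP n (P.map (Finset.image g)) := by
  refine ⟨List.pairwise_map.2 (hP.1.imp (Finset.disjoint_image g.injective).2), ?_, ?_⟩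
  · simpa using hP.2.1
  · refine Finset.eq_univ_of_forall fun y => (List.mem_foldr_union _ y).2 ?_
    obtain ⟨s, hs, hx⟩ := hP.exists_mem (g⁻¹ y)
    exact ⟨s.image g, List.mem_map_of_mem hs, Finset.mem_image.2 ⟨_, hx, by simp⟩⟩

theorem map_card_map_image (g : Perm (Fin n)) (P : List (Finset (Fin n))) :
    (P.map (Finset.image g)).map Finset.card = P.map Finset.card := by
  simp [Function.comp_def, Finset.card_image_of_injective _ g.injective]

theorem IsOSP.findIdx_lt_length (hP : IsOSP n P) (x : Fin n) : P.findIdx (x ∈ ·) < P.length := by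
  simpa using hP.exists_mem x

theorem IsOSP.findIdx_eq_iff (hP : IsOSP n P) {i : ℕ} (hi : i < P.length) (x : Fin n) :
    P.findIdx (x ∈ ·) = i ↔ x ∈ P[i] := by
  rw [List.findIdx_eq hi, decide_eq_true_iff]
  refine ⟨And.left, fun hx => ⟨hx, fun j hj => decide_eq_false fun hxj => ?_⟩⟩
  exact Finset.disjoint_left.1 (List.pairwise_iff_getElem.1 hP.1 j i _ hi hj) hxj hx

theorem IsOSP.card_filter_findIdx_eq (hP : IsOSP n P) (i : ℕ) :
    #{x | P.findIdx (x ∈ ·) = i} = ((P.map Finset.card)[i]?).getD 0 := by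
  by_cases hi : i < P.length
  · simp [hP.findIdx_eq_iff hi, hi]
  · rw [List.getElem?_eq_none (by simpa using not_lt.1 hi)]
    simp only [Option.getD_none, Finset.card_eq_zero, Finset.filter_eq_empty_iff]
    intro x _ hx
    exact hi (hx ▸ hP.findIdx_lt_length x)

theorem exists_mapsOSP_of_map_card_eq (hP : IsOSP n P) (hQ : IsOSP n Q)
    (h : P.map Finset.card = Q.map Finset.card) : ∃ g, MapsOSP g P Q := by
  obtain ⟨σ, hσ⟩ := Perm.exists_comp_eq_of_card_fiber_eq (f := fun x => P.findIdx (x ∈ ·))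
    (g := fun x => Q.findIdx (x ∈ ·))
    (fun i => by rw [hP.card_filter_findIdx_eq, hQ.card_filter_findIdx_eq, h])
  have hlen : P.length = Q.length := by simpa using congrArg List.length h
  refine ⟨σ, mapsOSP_iff_map_eq.2 (List.ext_getElem (by simpa using hlen) fun i hi hi' => ?_)⟩
  rw [List.getElem_map]
  refine Finset.eq_of_subset_of_card_le (fun y hy => ?_) ?_
  · obtain ⟨x, hx, rfl⟩ := Finset.mem_image.1 hy
    rw [← hQ.findIdx_eq_iff, hσ, hP.findIdx_eq_iff]
    exact hx
  · rw [Finset.card_image_of_injective _ σ.injective]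
    have hcard := List.getElem_of_eq h (by simpa using hi)
    rw [List.getElem_map, List.getElem_map] at hcard
    exact hcard.ge

end OrderedSetPartition

section YoungCosets

variable {n : ℕ}

def MeetsYoungCosetsEqually (D : Set (Perm (Fin n))) (lam : List ℕ) : Prop :=
  ∀ (a : Perm (Fin n)) (P : List (Finset (Fin n))), IsOSP n P → P.map Finset.card = lam →
    ∀ (b : Perm (Fin n)) (Q : List (Finset (Fin n))), IsOSP n Q → Q.map Finset.card = lam →
      (D ∩ a • (YoungSubgroup P : Set (Perm (Fin n)))).ncard =
        (D ∩ b • (YoungSubgroup Q : Set (Perm (Fin n)))).ncard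

theorem sep_mapsOSP_eq_inter_smul (D : Set (Perm (Fin n))) {a : Perm (Fin n)}
    {P Q : List (Finset (Fin n))} (ha : MapsOSP a P Q) :
    {g ∈ D | MapsOSP g P Q} = D ∩ a • (YoungSubgroup P : Set (Perm (Fin n))) := by
  rw [← setOf_mapsOSP_eq_smul ha]
  rfl

theorem isLamTransSet_iff_meetsYoungCosetsEqually (D : Set (Perm (Fin n))) (lam : List ℕ) :
    IsLamTransSet D lam ↔ MeetsYoungCosetsEqually D lam := by
  constructor
  · rintro ⟨r, hr⟩ a P hP hPl b Q hQ hQl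
    rw [← sep_mapsOSP_eq_inter_smul D (mapsOSP_map_image a P),
      ← sep_mapsOSP_eq_inter_smul D (mapsOSP_map_image b Q),
      hr _ _ hP (hP.map_image a) hPl (by rw [map_card_map_image, hPl]),
      hr _ _ hQ (hQ.map_image b) hQl (by rw [map_card_map_image, hQl])]
  · intro h
    by_cases hex : ∃ P₀, IsOSP n P₀ ∧ P₀.map Finset.card = lam
    · obtain ⟨P₀, hP₀, hP₀l⟩ := hex
      refine ⟨(D ∩ (1 : Perm (Fin n)) • (YoungSubgroup P₀ : Set (Perm (Fin n)))).ncard,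
        fun P Q hP hQ hPl hQl => ?_⟩
      obtain ⟨a, ha⟩ := exists_mapsOSP_of_map_card_eq hP hQ (hPl.trans hQl.symm)
      rw [sep_mapsOSP_eq_inter_smul D ha]
      exact h a P hP hPl 1 P₀ hP₀ hP₀l
    · exact ⟨0, fun P _ hP _ hPl _ => absurd ⟨P, hP, hPl⟩ hex⟩

theorem forall_wspace_orthogonal_iff_meetsYoungCosetsEqually (D : Set (Perm (Fin n))) (lam : List ℕ) :
    (∀ v : Perm (Fin n) → ℝ, v ∈ Wspace n lam → ∑ g, v g = 0 →
      ∑ g, D.indicator (fun _ => (1 : ℝ)) g * v g = 0) ↔ MeetsYoungCosetsEqually D lam := by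
  classical
  have key := Submodule.span_inf_ker_le_ker_iff
    (S := {v | ∃ (a : Perm (Fin n)) (P : List (Finset (Fin n))),
      IsOSP n P ∧ P.map Finset.card = lam ∧
      v = Set.indicator (a • (YoungSubgroup P : Set (Perm (Fin n)))) (fun _ => (1 : ℝ))})
    (dotProductBilin ℝ ℝ (D.indicator fun _ => 1))
    (dotProductBilin ℝ ℝ 1) ?_ ?_
  · simp only [SetLike.le_def, Submodule.mem_inf, LinearMap.mem_ker, and_imp,
      dotProductBilin_apply_apply, one_dotProduct] at key
    refine key.trans ?_
    constructor
    · intro h a P hP hPl b Q hQ hQl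
      have := h _ ⟨a, P, hP, hPl, rfl⟩ _ ⟨b, Q, hQ, hQl, rfl⟩
      rwa [Set.indicator_one_dotProduct_indicator_one, Set.indicator_one_dotProduct_indicator_one,
        Nat.cast_inj] at this
    · rintro h _ ⟨a, P, hP, hPl, rfl⟩ _ ⟨b, Q, hQ, hQl, rfl⟩
      rw [Set.indicator_one_dotProduct_indicator_one, Set.indicator_one_dotProduct_indicator_one,
        h a P hP hPl b Q hQ hQl]
  · rintro _ ⟨a, P, hP, hPl, rfl⟩ _ ⟨b, Q, hQ, hQl, rfl⟩
    obtain ⟨c, hc⟩ := exists_mapsOSP_of_map_card_eq hP hQ (hPl.trans hQl.symm)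
    simp only [dotProductBilin_apply_apply, one_dotProduct, Set.sum_indicator_one_eq_ncard,
      Set.ncard_smul_set, ncard_youngSubgroup_eq hc]
  · rintro _ ⟨a, P, -, -, rfl⟩
    simp only [dotProductBilin_apply_apply, one_dotProduct, Set.sum_indicator_one_eq_ncard,
      Set.ncard_smul_set, Nat.cast_ne_zero]
    exact ((Set.ncard_pos (Set.toFinite _)).2 ⟨1, one_mem _⟩).ne'

end YoungCosets

theorem lamTransSet_iff_orthogonal_general (n : ℕ) (lam : List ℕ) (D : Set (Equiv.Perm (Fin n))) :
    IsLamTransSet D lam ↔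
      ∀ v : Equiv.Perm (Fin n) → ℝ, v ∈ Wspace n lam →
        (∑ g : Equiv.Perm (Fin n), v g) = 0 →
        (∑ g : Equiv.Perm (Fin n), Set.indicator D (fun _ => (1 : ℝ)) g * v g) = 0 := by
  rw [isLamTransSet_iff_meetsYoungCosetsEqually, forall_wspace_orthogonal_iff_meetsYoungCosetsEqually]

/-- `D ⊆ S_n` (with indicator vector `x`) is `λ`-transitive if and only if `⟨x, v⟩ = 0`
for every `v ∈ W_λ` that is orthogonal to the all-ones vector. -/
theorem lamTransSet_iff_orthogonal (n : ℕ) (hn : 2 ≤ n) (lam : List ℕ)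
    (hlam : IsPartition n lam) (D : Set (Equiv.Perm (Fin n))) :
    IsLamTransSet D lam ↔
      ∀ v : Equiv.Perm (Fin n) → ℝ, v ∈ Wspace n lam →
        (∑ g : Equiv.Perm (Fin n), v g) = 0 →
        (∑ g : Equiv.Perm (Fin n), Set.indicator D (fun _ => (1 : ℝ)) g * v g) = 0 :=
  lamTransSet_iff_orthogonal_general n lam D
end

section
/- Let t ≥ 1 and n ≥ 2 with t ≤ k and t ≤ n − k. Suppose: (i) B is a set of k-element subsets of Ω = {1,…,n} forming a t-(n,k,ν) design, i.e., every t-element subset of Ω is contained in exactly ν ≥ 1 members of B; (ii) D₁ ⊆ S_k is a t-transitive set of permutations of {1,…,k}; (iii) D₂ ⊆ S_{n−k} is a t-transitive set of permutations of {1,…,n−k}. For each block b ∈ B fix bijections φ_b : {1,…,k} → b and ψ_b : {1,…,n−k} → Ω∖b, and let τ(j) = j − k. Then the set D = { (φ_b ∘ π) ∪ (ψ_b ∘ σ ∘ τ) : b ∈ B, π ∈ D₁, σ ∈ D₂ } — where (φ_b ∘ π) ∪ (ψ_b ∘ σ ∘ τ) is the permutation of Ω sending j ↦ φ_b(π(j))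 for 1 ≤ j ≤ k and j ↦ ψ_b(σ(j − k)) for k < j ≤ n — is a t-transitive set of permutations in S_n. -/
/-!
Fix a `t`-tuple `a` of distinct points. A glued permutation built from a block `s` and from
`π ∈ D₁`, `σ ∈ D₂` carries `a` to a tuple `b` exactly when `s` contains the targets of the
entries of `a` below `k`, avoids the targets of the other entries, and `π`, `σ` carry the two
parts of `a` to the `φ s`- and `ψ s`-preimages of these targets. A `t`-transitive set is
`i`-transitive for every `i ≤ t`, and in a `t`-design the number of blocks containing a given
`i`-set and avoiding a disjoint `j`-set (`i + j ≤ t`) depends only on `i` and `j`. Hence the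
number of elements of `D` carrying `a` to `b` does not depend on `b`. Summing over `b` gives
`|D|`, so this number is `|D|` divided by the number of injective `t`-tuples, and does not
depend on `a` either.
-/

/-- A set `D` of permutations of a finite set `X` is `t`-transitive (as a set) if there
is a constant `c` such that any `t`-tuple of distinct elements is carried to any other
`t`-tuple of distinct elements by exactly `c` elements of `D`. -/
def IsTTransSet {X : Type} (D : Set (Equiv.Perm X)) (t : ℕ) : Prop :=
  ∃ c : ℕ, ∀ a b : Fin t ↪ X,
    {g ∈ D | ∀ i : Fin t, g (a i) = b i}.ncard = c

open Finset Function Equiv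

theorem Set.ncard_eq_sum_ncard_fiber {α β : Type*} [Finite α] [DecidableEq β] (S : Set α)
    (f : α → β) (T : Finset β) (hf : ∀ g ∈ S, f g ∈ T) :
    S.ncard = ∑ y ∈ T, {g ∈ S | f g = y}.ncard := by
  classical
  have := Fintype.ofFinite α
  simp only [Set.ncard_eq_toFinset_card']
  rw [card_eq_sum_card_fiberwise (fun g hg => hf g (Set.mem_toFinset.mp hg))]
  congr! 2 with y
  ext g
  simp

section Transitivity

variable {X : Type} [Fintype X] [DecidableEq X] {D : Set (Perm X)} {t : ℕ}

theorem sum_ncard_sep_apply_eq_ncard (a : Fin t ↪ X) :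
    ∑ b : Fin t ↪ X, {g ∈ D | ∀ i, g (a i) = b i}.ncard = D.ncard := by
  rw [D.ncard_eq_sum_ncard_fiber (fun g => a.trans g.toEmbedding) univ (by simp)]
  congr! 3 with b - g
  simp [Embedding.ext_iff, eq_comm]

theorem isTTransSet_of_forall_exists_ncard_eq
    (h : ∀ a : Fin t ↪ X, ∃ c, ∀ b : Fin t ↪ X, {g ∈ D | ∀ i, g (a i) = b i}.ncard = c) :
    IsTTransSet D t := by
  by_cases htX : t ≤ Fintype.card X
  · have hpos : 0 < Fintype.card (Fin t ↪ X) := by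
      rw [Fintype.card_embedding_eq, Fintype.card_fin]
      exact Nat.descFactorial_pos.mpr htX
    refine ⟨D.ncard / Fintype.card (Fin t ↪ X), fun a b => ?_⟩
    obtain ⟨c, hc⟩ := h a
    have hsum := sum_ncard_sep_apply_eq_ncard (D := D) a
    simp only [hc, sum_const, card_univ, smul_eq_mul] at hsum
    rw [hc, ← hsum, Nat.mul_div_cancel_left _ hpos]
  · exact ⟨0, fun a => absurd (Fintype.card_le_of_embedding a) (by simpa using htX)⟩

theorem exists_ncard_sep_eq_of_option {ι : Type*} [Fintype ι]
    (hι : Fintype.card ι < Fintype.card X)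
    (h : ∃ c, ∀ a b : Option ι ↪ X, {g ∈ D | ∀ i, g (a i) = b i}.ncard = c) :
    ∃ c, ∀ a b : ι ↪ X, {g ∈ D | ∀ i, g (a i) = b i}.ncard = c := by
  obtain ⟨c, hc⟩ := h
  refine ⟨(Fintype.card X - Fintype.card ι) * c, fun a b => ?_⟩
  obtain ⟨x, hx⟩ : ∃ x, x ∉ Set.range a := by
    by_contra! hsurj
    exact hι.not_ge (Fintype.card_le_of_surjective a fun x => hsurj x)
  -- a permutation carrying `a` to `b` sends the fresh point `x` somewhere off the range of `b`
  rw [Set.ncard_eq_sum_ncard_fiber _ (fun g => g x) (Set.range b)ᶜ.toFinset]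
  · calc ∑ y ∈ (Set.range b)ᶜ.toFinset, {g ∈ {g ∈ D | ∀ i, g (a i) = b i} | g x = y}.ncard
        = ∑ y ∈ (Set.range b)ᶜ.toFinset, c := by
          refine sum_congr rfl fun y hy => ?_
          rw [← hc (a.optionElim x hx) (b.optionElim y (by simpa using hy))]
          congr 1
          ext g
          simp only [Set.mem_ofPred_eq, Option.forall, Embedding.optionElim_apply, Option.elim']
          tauto
      _ = (Fintype.card X - Fintype.card ι) * c := by
          rw [sum_const, smul_eq_mul, Set.toFinset_compl, card_compl, Set.toFinset_range,
            card_image_of_injective _ b.injective, card_univ]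
  · rintro g ⟨-, hg⟩
    simp only [Set.toFinset_compl, mem_compl, Set.mem_toFinset, Set.mem_range, not_exists]
    intro i hi
    exact hx ⟨i, g.injective ((hg i).trans hi)⟩

theorem IsTTransSet.exists_ncard_sep_eq (hD : IsTTransSet D t) (htX : t ≤ Fintype.card X)
    (ι : Type*) [Fintype ι] (hι : Fintype.card ι ≤ t) :
    ∃ c, ∀ a b : ι ↪ X, {g ∈ D | ∀ i, g (a i) = b i}.ncard = c := by
  induction hd : t - Fintype.card ι generalizing ι with
  | zero =>
    obtain ⟨c, hc⟩ := hD
    let e : ι ≃ Fin t := Fintype.equivFinOfCardEq (by omega)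
    refine ⟨c, fun a b => ?_⟩
    rw [← hc (e.symm.toEmbedding.trans a) (e.symm.toEmbedding.trans b)]
    simp only [Embedding.trans_apply, Equiv.coe_toEmbedding, e.symm.forall_congr_left,
      Equiv.symm_symm, Equiv.symm_apply_apply]
  | succ d ih =>
    refine exists_ncard_sep_eq_of_option (by omega) (ih (Option ι) ?_ ?_) <;>
      rw [Fintype.card_option] <;> omega

open Classical in
theorem IsTTransSet.exists_ncard_sep_comp_eq (hD : IsTTransSet D t)
    (htX : t ≤ Fintype.card X) (ι : Type*) [Fintype ι] (hι : Fintype.card ι ≤ t) {Y : Type*} :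
    ∃ c, ∀ (x : ι ↪ X) (f : X → Y), Injective f → ∀ y : ι ↪ Y,
      {g ∈ D | ∀ i, f (g (x i)) = y i}.ncard = if Set.range y ⊆ Set.range f then c else 0 := by
  obtain ⟨c, hc⟩ := hD.exists_ncard_sep_eq htX ι hι
  refine ⟨c, fun x f hf y => ?_⟩
  split_ifs with hy
  · choose z hz using fun i => hy (Set.mem_range_self i)
    have hzinj : Injective z := fun i j hij => y.injective (by rw [← hz, ← hz, hij])
    rw [← hc x ⟨z, hzinj⟩]
    simp only [Embedding.coeFn_mk, ← hz, hf.eq_iff]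
  · obtain ⟨-, ⟨i, rfl⟩, hi⟩ := Set.not_subset.mp hy
    rw [Set.ncard_eq_zero]
    exact Set.eq_empty_of_forall_notMem fun g hg => hi ⟨_, hg.2 i⟩

end Transitivity

theorem card_filter_subset_add_card_filter_disjoint {α : Type*} [DecidableEq α]
    (B : Finset (Finset α)) (I J : Finset α) (x : α) :
    #{b ∈ B | insert x I ⊆ b ∧ Disjoint J b} + #{b ∈ B | I ⊆ b ∧ Disjoint (insert x J) b}
      = #{b ∈ B | I ⊆ b ∧ Disjoint J b} := by
  rw [← card_filter_add_card_filter_not (s := {b ∈ B | I ⊆ b ∧ Disjoint J b}) (x ∈ ·),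
    filter_filter, filter_filter]
  congr 3 <;> ext b <;> simp only [insert_subset_iff, disjoint_insert_left] <;> tauto

section Design

variable {α : Type*} [Fintype α] [DecidableEq α] {B : Finset (Finset α)} {t k ν : ℕ}

/-- Double counting the pairs `I ⊆ T ⊆ b` with `#T = t` and `b ∈ B`. -/
theorem card_filter_subset_mul_choose (hB : ∀ b ∈ B, #b = k)
    (hdesign : ∀ T : Finset α, #T = t → #{b ∈ B | T ⊆ b} = ν) {I : Finset α} (hI : #I ≤ t) :
    #{b ∈ B | I ⊆ b} * (k - #I).choose (t - #I)
      = (Fintype.card α - #I).choose (t - #I) * ν := by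
  have := card_mul_eq_card_mul (fun b T => T ⊆ b) (s := {b ∈ B | I ⊆ b})
    (t := (univ.powersetCard t).filter (I ⊆ ·)) (m := (k - #I).choose (t - #I)) (n := ν)
    ?_ ?_
  · rwa [card_filter_powersetCard_subset _ _ _ (subset_univ I) hI, card_univ] at this
  · intro b hb
    obtain ⟨hbB, hIb⟩ := mem_filter.mp hb
    rw [← hB b hbB, ← card_filter_powersetCard_subset I b t hIb hI, bipartiteAbove]
    congr 1
    ext T
    simp only [mem_filter, mem_powersetCard, subset_univ, true_and]
    tauto
  · intro T hT
    obtain ⟨hT, hIT⟩ := mem_filter.mp hT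
    rw [← hdesign T (mem_powersetCard.mp hT).2, bipartiteBelow, filter_filter]
    congr 1
    ext b
    simp only [mem_filter]
    exact ⟨fun h => ⟨h.1, h.2.2⟩, fun h => ⟨h.1, hIT.trans h.2, h.2⟩⟩

theorem exists_card_filter_subset_disjoint_eq (hB : ∀ b ∈ B, #b = k)
    (hdesign : ∀ T : Finset α, #T = t → #{b ∈ B | T ⊆ b} = ν) (htk : t ≤ k) :
    ∀ j i, i + j ≤ t → ∃ μ, ∀ I J : Finset α, #I = i → #J = j → Disjoint I J →
      #{b ∈ B | I ⊆ b ∧ Disjoint J b} = μ := by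
  intro j
  induction j with
  | zero =>
    intro i hi
    refine ⟨(Fintype.card α - i).choose (t - i) * ν / (k - i).choose (t - i),
      fun I J hI hJ _ => ?_⟩
    have hpos : 0 < (k - i).choose (t - i) := Nat.choose_pos (by omega)
    rw [card_eq_zero.mp hJ, ← hI, ← card_filter_subset_mul_choose hB hdesign (by omega),
      hI, Nat.mul_div_cancel _ hpos]
    simp
  | succ j ih =>
    intro i hi
    obtain ⟨μ₁, hμ₁⟩ := ih i (by omega)
    obtain ⟨μ₂, hμ₂⟩ := ih (i + 1) (by omega)
    refine ⟨μ₁ - μ₂, fun I J hI hJ hIJ => ?_⟩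
    obtain ⟨x, hx⟩ := card_pos.mp (show 0 < #J by omega)
    have hxI : x ∉ I := fun h => disjoint_left.mp hIJ h hx
    have hJ' : #(J.erase x) = j := by rw [card_erase_of_mem hx, hJ]; rfl
    have hIJ' : Disjoint I (J.erase x) := hIJ.mono_right (erase_subset x J)
    have := card_filter_subset_add_card_filter_disjoint B I (J.erase x) x
    rw [insert_erase hx, hμ₁ I _ hI hJ' hIJ',
      hμ₂ _ _ (by rw [card_insert_of_notMem hxI, hI]) hJ'
        (disjoint_insert_left.mpr ⟨notMem_erase x J, hIJ'⟩)] at this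
    omega

end Design

section FinJoin

variable {n k : ℕ} {β : Type*}

/-- `Fin.append f₁ f₂`, read on `Fin n` instead of `Fin (k + (n - k))`. -/
def finJoin (f₁ : Fin k → β) (f₂ : Fin (n - k) → β) : Fin n → β := fun j =>
  if h : (j : ℕ) < k then f₁ ⟨(j : ℕ), h⟩
  else f₂ ⟨(j : ℕ) - k, by have := j.isLt; omega⟩

theorem finJoin_injective {f₁ : Fin k → β} {f₂ : Fin (n - k) → β} (h₁ : Injective f₁)
    (h₂ : Injective f₂) (h : ∀ i j, f₁ i ≠ f₂ j) : Injective (finJoin f₁ f₂) := by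
  intro j j' hjj'
  unfold finJoin at hjj'
  split_ifs at hjj' with hj hj'
  · simpa [Fin.ext_iff] using h₁ hjj'
  · exact absurd hjj' (h _ _)
  · exact absurd hjj'.symm (h _ _)
  · have := congrArg Fin.val (h₂ hjj')
    simp only at this
    omega

theorem finJoin_inj (hkn : k ≤ n) {f₁ g₁ : Fin k → β} {f₂ g₂ : Fin (n - k) → β} :
    finJoin f₁ f₂ = finJoin g₁ g₂ ↔ f₁ = g₁ ∧ f₂ = g₂ := by
  refine ⟨fun h => ⟨funext fun i => ?_, funext fun i => ?_⟩, fun ⟨h₁, h₂⟩ => h₁ ▸ h₂ ▸ rfl⟩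
  · simpa [finJoin] using congrFun h ⟨i, by omega⟩
  · simpa [finJoin] using congrFun h ⟨k + i, by omega⟩

def lowPart {ι : Type*} (k : ℕ) (a : ι ↪ Fin n) : {i // (a i : ℕ) < k} ↪ Fin k :=
  ⟨fun i => ⟨a i, i.2⟩, fun i i' h => Subtype.ext (a.injective (Fin.ext (by simpa using h)))⟩

def highPart {ι : Type*} (k : ℕ) (a : ι ↪ Fin n) : {i // ¬ (a i : ℕ) < k} ↪ Fin (n - k) :=
  ⟨fun i => ⟨a i - k, by have := (a i).isLt; omega⟩, fun i i' h => by
    have := congrArg Fin.val h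
    have := i.2
    have := i'.2
    simp only at *
    exact Subtype.ext (a.injective (Fin.ext (by omega)))⟩

theorem forall_finJoin_apply_eq_iff {ι : Type*} (f₁ : Fin k → β) (f₂ : Fin (n - k) → β)
    (a : ι ↪ Fin n) (b : ι → β) :
    (∀ i, finJoin f₁ f₂ (a i) = b i) ↔
      (∀ i, f₁ (lowPart k a i) = b i) ∧ (∀ i, f₂ (highPart k a i) = b i) := by
  refine ⟨fun h => ⟨fun i => ?_, fun i => ?_⟩, fun ⟨h₁, h₂⟩ i => ?_⟩
  · exact (dif_pos i.2).symm.trans (h i)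
  · exact (dif_neg i.2).symm.trans (h i)
  · by_cases hi : (a i : ℕ) < k
    · exact (dif_pos hi).trans (h₁ ⟨i, hi⟩)
    · exact (dif_neg hi).trans (h₂ ⟨i, hi⟩)

end FinJoin

section GluedPerms

variable {n k : ℕ}

def gluedPerms (B : Finset (Finset (Fin n))) (D₁ : Set (Perm (Fin k)))
    (D₂ : Set (Perm (Fin (n - k)))) (φ : Finset (Fin n) → Fin k → Fin n)
    (ψ : Finset (Fin n) → Fin (n - k) → Fin n) : Set (Perm (Fin n)) :=
  {g | ∃ s ∈ B, ∃ π ∈ D₁, ∃ σ ∈ D₂, ⇑g = finJoin (φ s ∘ π) (ψ s ∘ σ)}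

theorem gluedPerms_eq (B : Finset (Finset (Fin n))) (D₁ : Set (Perm (Fin k)))
    (D₂ : Set (Perm (Fin (n - k)))) (φ : Finset (Fin n) → Fin k → Fin n)
    (ψ : Finset (Fin n) → Fin (n - k) → Fin n) :
    gluedPerms B D₁ D₂ φ ψ = {g : Perm (Fin n) | ∃ b ∈ (B : Set (Finset (Fin n))),
      ∃ π ∈ D₁, ∃ σ ∈ D₂, ∀ j : Fin n, g j =
        if h : (j : ℕ) < k then φ b (π ⟨(j : ℕ), h⟩)
        else ψ b (σ ⟨(j : ℕ) - k, by have := j.isLt; omega⟩)} := by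
  simp only [gluedPerms, funext_iff, mem_coe]
  rfl

variable {B : Finset (Finset (Fin n))} {D₁ : Set (Perm (Fin k))}
  {D₂ : Set (Perm (Fin (n - k)))} {φ : Finset (Fin n) → Fin k → Fin n}
  {ψ : Finset (Fin n) → Fin (n - k) → Fin n}

theorem finJoin_comp_injective (hφ : ∀ s ∈ B, Injective (φ s) ∧ Set.range (φ s) = s)
    (hψ : ∀ s ∈ B, Injective (ψ s) ∧ Set.range (ψ s) = (↑s)ᶜ) {s : Finset (Fin n)} (hs : s ∈ B)
    (π : Perm (Fin k)) (σ : Perm (Fin (n - k))) :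
    Injective (finJoin (φ s ∘ π) (ψ s ∘ σ)) := by
  refine finJoin_injective ((hφ s hs).1.comp π.injective) ((hψ s hs).1.comp σ.injective)
    fun i j h => ?_
  have hi : φ s (π i) ∈ Set.range (φ s) := Set.mem_range_self _
  have hj : ψ s (σ j) ∈ Set.range (ψ s) := Set.mem_range_self _
  rw [(hφ s hs).2, show φ s (π i) = ψ s (σ j) from h] at hi
  rw [(hψ s hs).2] at hj
  exact hj hi

/-- The block is recovered as the image of the first `k` positions. -/
theorem finJoin_comp_injOn (hkn : k ≤ n) (hφ : ∀ s ∈ B, Injective (φ s) ∧ Set.range (φ s) = s)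
    (hψ : ∀ s ∈ B, Injective (ψ s) ∧ Set.range (ψ s) = (↑s)ᶜ) :
    Set.InjOn (fun p : Finset (Fin n) × Perm (Fin k) × Perm (Fin (n - k)) =>
      finJoin (φ p.1 ∘ p.2.1) (ψ p.1 ∘ p.2.2)) {p | p.1 ∈ B} := by
  rintro ⟨s, π, σ⟩ hs ⟨s', π', σ'⟩ hs' h
  obtain ⟨h₁, h₂⟩ := (finJoin_inj hkn).mp h
  have hss' : s = s' := by
    have := congrArg Set.range h₁
    rwa [Set.range_comp, Set.range_comp, π.range_eq_univ, π'.range_eq_univ, Set.image_univ,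
      Set.image_univ, (hφ s hs).2, (hφ s' hs').2, coe_inj] at this
  subst hss'
  have hπ : π = π' := Equiv.ext fun i => (hφ s hs).1 (congrFun h₁ i)
  have hσ : σ = σ' := Equiv.ext fun i => (hψ s hs).1 (congrFun h₂ i)
  rw [hπ, hσ]

theorem ncard_gluedPerms_sep_eq_sum (hkn : k ≤ n)
    (hφ : ∀ s ∈ B, Injective (φ s) ∧ Set.range (φ s) = s)
    (hψ : ∀ s ∈ B, Injective (ψ s) ∧ Set.range (ψ s) = (↑s)ᶜ) {ι : Type*} (a b : ι ↪ Fin n) :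
    {g ∈ gluedPerms B D₁ D₂ φ ψ | ∀ i, g (a i) = b i}.ncard
      = ∑ s ∈ B, {π ∈ D₁ | ∀ i, φ s (π (lowPart k a i)) = b i}.ncard
          * {σ ∈ D₂ | ∀ i, ψ s (σ (highPart k a i)) = b i}.ncard := by
  set Φ := fun p : Finset (Fin n) × Perm (Fin k) × Perm (Fin (n - k)) =>
    finJoin (φ p.1 ∘ p.2.1) (ψ p.1 ∘ p.2.2)
  set T := {p | (p.1 ∈ B ∧ p.2.1 ∈ D₁ ∧ p.2.2 ∈ D₂) ∧ ∀ i, Φ p (a i) = b i}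
  have himage : (⇑) '' {g ∈ gluedPerms B D₁ D₂ φ ψ | ∀ i, g (a i) = b i} = Φ '' T := by
    ext f
    constructor
    · rintro ⟨g, ⟨⟨s, hs, π, hπ, σ, hσ, hg⟩, hab⟩, rfl⟩
      exact ⟨(s, π, σ), ⟨⟨hs, hπ, hσ⟩, fun i => (congrFun hg (a i)).symm.trans (hab i)⟩,
        hg.symm⟩
    · rintro ⟨⟨s, π, σ⟩, ⟨⟨hs, hπ, hσ⟩, hab⟩, rfl⟩
      have hbij := Finite.injective_iff_bijective.mp (finJoin_comp_injective hφ hψ hs π σ)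
      exact ⟨Equiv.ofBijective _ hbij, ⟨⟨s, hs, π, hπ, σ, hσ, rfl⟩, hab⟩, rfl⟩
  have hfiber : ∀ s ∈ B, {p ∈ T | p.1 = s}.ncard
      = {π ∈ D₁ | ∀ i, φ s (π (lowPart k a i)) = b i}.ncard
          * {σ ∈ D₂ | ∀ i, ψ s (σ (highPart k a i)) = b i}.ncard := by
    intro s hs
    rw [← Set.ncard_prod, ← Set.ncard_image_of_injective (_ ×ˢ _) (Prod.mk_right_injective s)]
    refine congrArg Set.ncard ?_
    ext ⟨s', π, σ⟩
    simp only [T, Φ, forall_finJoin_apply_eq_iff, Set.mem_image, Set.mem_prod,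
      Set.mem_ofPred_eq, Prod.mk.injEq]
    constructor
    · rintro ⟨⟨⟨-, hπ, hσ⟩, h₁, h₂⟩, rfl⟩
      exact ⟨(π, σ), ⟨⟨hπ, h₁⟩, hσ, h₂⟩, rfl, rfl⟩
    · rintro ⟨-, ⟨⟨hπ, h₁⟩, hσ, h₂⟩, rfl, rfl⟩
      exact ⟨⟨⟨hs, hπ, hσ⟩, h₁, h₂⟩, rfl⟩
  calc {g ∈ gluedPerms B D₁ D₂ φ ψ | ∀ i, g (a i) = b i}.ncard
      = (Φ '' T).ncard := by rw [← himage, Set.ncard_image_of_injective _ DFunLike.coe_injective]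
    _ = T.ncard := ((finJoin_comp_injOn hkn hφ hψ).mono fun p hp => hp.1.1).ncard_image
    _ = _ := by
      rw [T.ncard_eq_sum_ncard_fiber Prod.fst B fun p hp => hp.1.1]
      exact sum_congr rfl hfiber

theorem exists_ncard_gluedPerms_sep_eq {t ν : ℕ} (hkn : k ≤ n) (htk : t ≤ k)
    (htnk : t ≤ n - k) (hB : ∀ s ∈ B, #s = k)
    (hdesign : ∀ T : Finset (Fin n), #T = t → #{s ∈ B | T ⊆ s} = ν)
    (hD₁ : IsTTransSet D₁ t) (hD₂ : IsTTransSet D₂ t)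
    (hφ : ∀ s ∈ B, Injective (φ s) ∧ Set.range (φ s) = s)
    (hψ : ∀ s ∈ B, Injective (ψ s) ∧ Set.range (ψ s) = (↑s)ᶜ) (a : Fin t ↪ Fin n) :
    ∃ c, ∀ b : Fin t ↪ Fin n, {g ∈ gluedPerms B D₁ D₂ φ ψ | ∀ i, g (a i) = b i}.ncard = c := by
  classical
  have hlow : Fintype.card {i // (a i : ℕ) < k} ≤ t := (Fintype.card_subtype_le _).trans (by simp)
  obtain ⟨c₁, hc₁⟩ := hD₁.exists_ncard_sep_comp_eq (by simpa using htk) {i // (a i : ℕ) < k}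
    hlow (Y := Fin n)
  obtain ⟨c₂, hc₂⟩ := hD₂.exists_ncard_sep_comp_eq (by simpa using htnk)
    {i // ¬ (a i : ℕ) < k} ((Fintype.card_subtype_le _).trans (by simp)) (Y := Fin n)
  obtain ⟨μ, hμ⟩ := exists_card_filter_subset_disjoint_eq hB hdesign htk
    (Fintype.card {i // ¬ (a i : ℕ) < k}) (Fintype.card {i // (a i : ℕ) < k})
    (by rw [Fintype.card_subtype_compl, Fintype.card_fin]; omega)
  refine ⟨μ * (c₁ * c₂), fun b => ?_⟩
  set y₁ := (Embedding.subtype fun i => (a i : ℕ) < k).trans b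
  set y₂ := (Embedding.subtype fun i => ¬ (a i : ℕ) < k).trans b
  rw [ncard_gluedPerms_sep_eq_sum hkn hφ hψ]
  calc _ = ∑ s ∈ B, if univ.map y₁ ⊆ s ∧ Disjoint (univ.map y₂) s then c₁ * c₂ else 0 := by
        refine sum_congr rfl fun s hs => ?_
        obtain ⟨hφs, hφr⟩ := hφ s hs
        obtain ⟨hψs, hψr⟩ := hψ s hs
        have h₁ := hc₁ (lowPart k a) (φ s) hφs y₁
        have h₂ := hc₂ (highPart k a) (ψ s) hψs y₂
        simp only [y₁, y₂, Embedding.trans_apply, Embedding.coe_subtype] at h₁ h₂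
        rw [h₁, h₂, hφr, hψr, ite_zero_mul_ite_zero]
        exact if_congr (by simp [y₁, y₂, subset_iff, disjoint_left, Set.range_subset_iff]) rfl rfl
    _ = μ * (c₁ * c₂) := by
      rw [sum_ite, sum_const_zero, add_zero, sum_const, smul_eq_mul, hμ]
      · rw [card_map, card_univ]
      · rw [card_map, card_univ]
      · simp only [disjoint_left, mem_map, mem_univ, true_and]
        rintro _ ⟨i, rfl⟩ ⟨j, hj⟩
        have hij : (j : Fin t) = i := b.injective hj
        exact j.2 (hij ▸ i.2)

end GluedPerms

/-- **A recursive construction of `t`-transitive sets.**  Given a `t`-(n,k,ν) design `B`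
on `Ω = Fin n`, a `t`-transitive set `D₁ ⊆ S_k` and a `t`-transitive set `D₂ ⊆ S_{n-k}`,
together with bijections `φ_b : {1,…,k} → b` and `ψ_b : {1,…,n-k} → Ω \ b` for each
block `b`, the set
`D = { (φ_b ∘ π) ∪ (ψ_b ∘ σ ∘ τ) : b ∈ B, π ∈ D₁, σ ∈ D₂ }`
is a `t`-transitive set of permutations in `S_n`. -/
theorem construction_tTransitive (t n k : ℕ)
    (htk : t ≤ k) (htnk : t ≤ n - k) (hkn : k ≤ n)
    (ν : ℕ)
    (B : Set (Finset (Fin n)))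
    (hBcard : ∀ b ∈ B, b.card = k)
    (hdesign : ∀ T : Finset (Fin n), T.card = t → {b ∈ B | T ⊆ b}.ncard = ν)
    (D₁ : Set (Equiv.Perm (Fin k))) (hD₁ : IsTTransSet D₁ t)
    (D₂ : Set (Equiv.Perm (Fin (n - k)))) (hD₂ : IsTTransSet D₂ t)
    (φ : Finset (Fin n) → Fin k → Fin n)
    (hφ : ∀ b ∈ B, Function.Injective (φ b) ∧ Set.range (φ b) = (b : Set (Fin n)))
    (ψ : Finset (Fin n) → Fin (n - k) → Fin n)
    (hψ : ∀ b ∈ B, Function.Injective (ψ b) ∧ Set.range (ψ b) = (↑b : Set (Fin n))ᶜ)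
    (D : Set (Equiv.Perm (Fin n)))
    (hD : D = {g : Equiv.Perm (Fin n) | ∃ b ∈ B, ∃ π ∈ D₁, ∃ σ ∈ D₂,
      ∀ j : Fin n, g j =
        if h : (j : ℕ) < k then φ b (π ⟨(j : ℕ), h⟩)
        else ψ b (σ ⟨(j : ℕ) - k, by have := j.isLt; omega⟩)}) :
    IsTTransSet D t := by
  obtain ⟨B, rfl⟩ := B.toFinite.exists_finset_coe
  rw [← gluedPerms_eq] at hD
  subst hD
  refine isTTransSet_of_forall_exists_ncard_eq (exists_ncard_gluedPerms_sep_eq (ν := ν)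
    hkn htk htnk hBcard (fun T hT => ?_) hD₁ hD₂ hφ hψ)
  rw [← hdesign T hT, ← Set.ncard_coe_finset, coe_filter]
  rfl
end

section
/- Let q be an odd prime power and F_q the finite field with q elements. Let S ⊆ F_q ∖ {0} satisfy S ∩ (−S) = ∅ and S ∪ (−S) = F_q ∖ {0}. Let D = { x ↦ ax + b : a ∈ S, b ∈ F_q }, a set of permutations of F_q. Then D is a sharply 2-homogeneous set: for any two 2-element subsets {u,v} and {y,z} of F_q, there is exactly one f ∈ D with f({u,v}) = {y,z}. (Equivalently, D is a (q−2,2)-transitive set of permutations of F_q with constant r = 1.) -/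
/-- The affine permutation `x ↦ a * x + b` for `a ≠ 0`. -/
def affinePerm {F : Type} [Field F] (a : F) (ha : a ≠ 0) (b : F) : Equiv.Perm F :=
  (Equiv.mulLeft₀ a ha).trans (Equiv.addRight b)

lemma affinePerm_apply {F : Type} [Field F] (a : F) (ha : a ≠ 0) (b x : F) :
    affinePerm a ha b x = a * x + b := rfl

/-- Let `F` be a finite field of odd order `q`, and let `S ⊆ F \ {0}` with
`S ∩ (-S) = ∅` and `S ∪ (-S) = F \ {0}`.  Then the set
`D = { x ↦ a x + b : a ∈ S, b ∈ F }` of permutations of `F` is sharply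
`2`-homogeneous: for any two 2-element subsets `{u,v}` and `{y,z}` of `F` there is
exactly one `f ∈ D` with `f {u,v} = {y,z}`. -/
theorem affine_halfSet_sharply_two_homogeneous
    (F : Type) [Field F] [Fintype F] (hodd : Odd (Fintype.card F))
    (S : Set F) (hS0 : (0 : F) ∉ S) (hdisj : S ∩ (-S) = ∅)
    (hunion : S ∪ (-S) = ({0} : Set F)ᶜ) :
    ∀ u v y z : F, u ≠ v → y ≠ z →
      ∃! f : Equiv.Perm F,
        (∃ a ∈ S, ∃ b : F, ∀ x : F, f x = a * x + b) ∧
        (⇑f) '' ({u, v} : Set F) = ({y, z} : Set F) := by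
  intro u v y z huv hyz
  have huv' : u - v ≠ 0 := sub_ne_zero.mpr huv
  have hyz' : y - z ≠ 0 := sub_ne_zero.mpr hyz
  set d : F := (y - z) / (u - v) with hd
  have hd0 : d ≠ 0 := div_ne_zero hyz' huv'
  have hduv : d * (u - v) = y - z := div_mul_cancel₀ _ huv'
  have hmem : d ∈ S ∪ (-S) := by
    rw [hunion]; simpa using hd0
  -- any slope of a map in D sending {u,v} to {y,z} is d or -d
  have key : ∀ (g : Equiv.Perm F) (a : F), a ∈ S → ∀ b : F,
      (∀ x : F, g x = a * x + b) → (⇑g) '' ({u, v} : Set F) = ({y, z} : Set F) →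
      (a = d ∧ b = y - d * u) ∨ (a = -d ∧ b = z + d * u) := by
    intro g a haS b hg himg
    rw [Set.image_pair, hg, hg, Set.pair_eq_pair_iff] at himg
    rcases himg with ⟨h1, h2⟩ | ⟨h1, h2⟩
    · left
      have ha : a * (u - v) = y - z := by linear_combination h1 - h2
      have : a = d := by
        rw [hd, eq_div_iff huv']; exact ha
      refine ⟨this, ?_⟩
      rw [← h1, this]; ring
    · right
      have ha : a * (u - v) = z - y := by linear_combination h1 - h2
      have : a = -d := by
        rw [hd, ← neg_div, eq_div_iff huv']
        linear_combination ha
      refine ⟨this, ?_⟩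
      rw [← h1, this]; ring
  rcases hmem with hdS | hdS
  · -- d ∈ S : take f x = d x + (y - d u)
    refine ⟨affinePerm d hd0 (y - d * u), ⟨⟨d, hdS, y - d * u, fun x => rfl⟩, ?_⟩, ?_⟩
    · rw [Set.image_pair]
      have h1 : affinePerm d hd0 (y - d * u) u = y := by
        rw [affinePerm_apply]; ring
      have h2 : affinePerm d hd0 (y - d * u) v = z := by
        rw [affinePerm_apply]; linear_combination -hduv
      rw [h1, h2]
    · rintro g ⟨⟨a, haS, b, hg⟩, himg⟩
      rcases key g a haS b hg himg with ⟨ha, hb⟩ | ⟨ha, hb⟩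
      · ext x
        rw [hg, affinePerm_apply, ha, hb]
      · exfalso
        have : a ∈ S ∩ (-S) := ⟨haS, by rw [ha]; exact Set.neg_mem_neg.mpr hdS⟩
        rw [hdisj] at this; exact this
  · -- -d ∈ S : take f x = -d x + (z + d u)
    have hdS' : -d ∈ S := Set.mem_neg.mp hdS
    have hnd0 : -d ≠ 0 := neg_ne_zero.mpr hd0
    refine ⟨affinePerm (-d) hnd0 (z + d * u), ⟨⟨-d, hdS', z + d * u, fun x => rfl⟩, ?_⟩, ?_⟩
    · rw [Set.image_pair]
      have h1 : affinePerm (-d) hnd0 (z + d * u) u = z := by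
        rw [affinePerm_apply]; ring
      have h2 : affinePerm (-d) hnd0 (z + d * u) v = y := by
        rw [affinePerm_apply]; linear_combination hduv
      rw [h1, h2, Set.pair_comm]
    · rintro g ⟨⟨a, haS, b, hg⟩, himg⟩
      rcases key g a haS b hg himg with ⟨ha, hb⟩ | ⟨ha, hb⟩
      · exfalso
        have : a ∈ S ∩ (-S) := ⟨haS, by rw [ha]; simpa using hdS⟩
        rw [hdisj] at this; exact this
      · ext x
        rw [hg, affinePerm_apply, ha, hb]
end

section
/- Let q be a prime power with q ≡ 3 (mod 4), and consider the natural action of SL₂(F_q) on the projective line ℙ¹(F_q) (the projectivization of F_q²), which factors through PSL₂(F_q). This action is (q−2,2,1)-transitive: for any subsets A₁, A₂, A₃ and B₁, B₂, B₃ of ℙ¹(F_q) with (A₁,A₂,A₃) and (B₁,B₂,B₃) each pairwise disjoint with union ℙ¹(F_q), |A₁| = |B₁| = q−2, |A₂| = |B₂| = 2, and |A₃| = |B₃| = 1, there exists g ∈ SL₂(F_q) whose induced action on ℙ¹(F_q) maps A_i onto B_i for i = 1, 2, 3. -/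
open scoped LinearAlgebra.Projectivization

/-- The action of `g ∈ SL₂(F)` on the projective line `ℙ¹(F) = ℙ F (Fin 2 → F)`,
induced by the linear action of `g` on `F²`.  (It factors through `PSL₂(F)`.) -/
noncomputable def sl2ProjAction {F : Type} [Field F]
    (g : Matrix.SpecialLinearGroup (Fin 2) F) :
    ℙ F (Fin 2 → F) → ℙ F (Fin 2 → F) :=
  Projectivization.map (Matrix.SpecialLinearGroup.toLin' g).toLinearMap
    (Matrix.SpecialLinearGroup.toLin' g).injective

/-!
`SL₂(F)` acts 2-transitively on `ℙ¹(F)`, so it suffices to move any point off `{0, ∞}` to any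
other such point by an element preserving `{0, ∞}`. The diagonal matrices `diag(a, a⁻¹)` fix `0`
and `∞` and act by `t ↦ a²t`, while `t ↦ -1/t` swaps `0` and `∞`. As `-1` is not a square when
`q ≡ 3 (mod 4)`, every nonzero ratio `s / t` is either a square or minus a square, and one of the
two moves carries `t` to `s`. The part of size `q - 2` is the complement of the other two parts,
so it follows along.
-/

open scoped MatrixGroups Pointwise
open Projectivization Matrix.SpecialLinearGroup

section GroupAction

variable {G X : Type*} [Group G] [MulAction G X]

theorem exists_smul_pair_eq_and_smul_eq [MulAction.IsMultiplyPretransitive G X 2] {o o' : X}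
    (ho : o ≠ o')
    (hstab : ∀ p q, p ∉ ({o, o'} : Set X) → q ∉ ({o, o'} : Set X) →
      ∃ g : G, g • ({o, o'} : Set X) = {o, o'} ∧ g • p = q)
    {p₁ p₂ p₃ q₁ q₂ q₃ : X} (hp : p₁ ≠ p₂) (hq : q₁ ≠ q₂)
    (hp₃ : p₃ ∉ ({p₁, p₂} : Set X)) (hq₃ : q₃ ∉ ({q₁, q₂} : Set X)) :
    ∃ g : G, g • ({p₁, p₂} : Set X) = {q₁, q₂} ∧ g • p₃ = q₃ := by
  obtain ⟨a, ha₁, ha₂⟩ := MulAction.is_two_pretransitive_iff.mp ‹_› ho hp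
  obtain ⟨b, hb₁, hb₂⟩ := MulAction.is_two_pretransitive_iff.mp ‹_› ho hq
  have ha : a • ({o, o'} : Set X) = {p₁, p₂} := by simp [Set.smul_set_insert, ha₁, ha₂]
  have hb : b • ({o, o'} : Set X) = {q₁, q₂} := by simp [Set.smul_set_insert, hb₁, hb₂]
  obtain ⟨k, hk, hkp⟩ := hstab (a⁻¹ • p₃) (b⁻¹ • q₃)
    (by rwa [← Set.smul_mem_smul_set_iff (a := a), smul_inv_smul, ha])
    (by rwa [← Set.smul_mem_smul_set_iff (a := b), smul_inv_smul, hb])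
  refine ⟨b * k * a⁻¹, ?_, ?_⟩
  · rw [← ha, ← hb, mul_smul, mul_smul, inv_smul_smul, hk]
  · rw [mul_smul, mul_smul, hkp, smul_inv_smul]

theorem eq_compl_union_of_partition {A : Fin 3 → Set X}
    (hdisj : ∀ i j, i ≠ j → Disjoint (A i) (A j)) (hunion : ⋃ i, A i = Set.univ) :
    A 0 = (A 1 ∪ A 2)ᶜ := by
  rw [eq_compl_iff_isCompl]
  refine ⟨Disjoint.union_right (hdisj 0 1 (by decide)) (hdisj 0 2 (by decide)), ?_⟩
  rw [codisjoint_iff, Set.top_eq_univ, ← hunion]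
  ext x
  simp [Fin.exists_fin_succ]

theorem smul_eq_of_partition {A B : Fin 3 → Set X}
    (hAdisj : ∀ i j, i ≠ j → Disjoint (A i) (A j)) (hBdisj : ∀ i j, i ≠ j → Disjoint (B i) (B j))
    (hAunion : ⋃ i, A i = Set.univ) (hBunion : ⋃ i, B i = Set.univ) {g : G}
    (h₁ : g • A 1 = B 1) (h₂ : g • A 2 = B 2) : ∀ i, g • A i = B i := by
  have h₀ : g • A 0 = B 0 := by
    rw [eq_compl_union_of_partition hAdisj hAunion, eq_compl_union_of_partition hBdisj hBunion,
      Set.smul_set_compl, Set.smul_set_union, h₁, h₂]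
  intro i
  fin_cases i
  exacts [h₀, h₁, h₂]

end GroupAction

section ProjectiveLine

variable {F : Type*} [Field F]

variable (F) in
noncomputable def affinePoint (t : F) : ℙ F (Fin 2 → F) := mk F ![t, 1] (by simp)

variable (F) in
noncomputable def infinityPoint : ℙ F (Fin 2 → F) := mk F ![1, 0] (by simp)

theorem affinePoint_zero_ne_infinityPoint : affinePoint F 0 ≠ infinityPoint F := by
  rw [affinePoint, infinityPoint, Ne, mk_eq_mk_iff']
  rintro ⟨a, ha⟩
  simpa using congrFun ha 1

theorem exists_eq_affinePoint_of_ne_infinityPoint {p : ℙ F (Fin 2 → F)}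
    (hp : p ≠ infinityPoint F) : ∃ t, p = affinePoint F t := by
  induction p using Projectivization.ind with | h v hv => ?_
  have hv₁ : v 1 ≠ 0 := by
    refine fun h ↦ hp ((mk_eq_mk_iff' F _ _ _ _).mpr ⟨v 0, ?_⟩)
    ext i; fin_cases i <;> simp [h]
  refine ⟨v 0 / v 1, (mk_eq_mk_iff' F _ _ _ _).mpr ⟨v 1, ?_⟩⟩
  ext i; fin_cases i <;> simp [hv₁, mul_div_cancel₀]

theorem diag2_smul_infinityPoint {a : F} (ha : a ≠ 0) :
    diag2 a ha • infinityPoint F = infinityPoint F := by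
  rw [infinityPoint, smul_mk, mk_eq_mk_iff', Matrix.SpecialLinearGroup.smul_def]
  refine ⟨a, ?_⟩
  ext i; fin_cases i <;> simp [diag2_coe']

theorem diag2_smul_affinePoint {a : F} (ha : a ≠ 0) (t : F) :
    diag2 a ha • affinePoint F t = affinePoint F (a * a * t) := by
  rw [affinePoint, affinePoint, smul_mk, mk_eq_mk_iff', Matrix.SpecialLinearGroup.smul_def]
  refine ⟨a⁻¹, ?_⟩
  ext i; fin_cases i <;> simp [diag2_coe']; field_simp

variable (F) in
def inversion : SL(2, F) := ⟨!![0, -1; 1, 0], by simp [Matrix.det_fin_two]⟩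

theorem inversion_smul_infinityPoint : inversion F • infinityPoint F = affinePoint F 0 := by
  rw [affinePoint, infinityPoint, smul_mk, mk_eq_mk_iff', Matrix.SpecialLinearGroup.smul_def]
  refine ⟨1, ?_⟩
  ext i; fin_cases i <;> simp [inversion]

theorem inversion_smul_affinePoint_zero : inversion F • affinePoint F 0 = infinityPoint F := by
  rw [affinePoint, infinityPoint, smul_mk, mk_eq_mk_iff', Matrix.SpecialLinearGroup.smul_def]
  refine ⟨-1, ?_⟩
  ext i; fin_cases i <;> simp [inversion]

theorem inversion_smul_affinePoint {t : F} (ht : t ≠ 0) :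
    inversion F • affinePoint F t = affinePoint F (-t⁻¹) := by
  rw [affinePoint, affinePoint, smul_mk, mk_eq_mk_iff', Matrix.SpecialLinearGroup.smul_def]
  refine ⟨t, ?_⟩
  ext i; fin_cases i <;> simp [inversion, ht]

theorem exists_smul_affinePoint_eq_of_isSquare_div {s t : F} (hs : s ≠ 0) (ht : t ≠ 0)
    (h : IsSquare (s / t)) :
    ∃ g : SL(2, F), g • affinePoint F 0 = affinePoint F 0 ∧
      g • infinityPoint F = infinityPoint F ∧ g • affinePoint F t = affinePoint F s := by
  obtain ⟨a, ha⟩ := h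
  have ha₀ : a ≠ 0 := by rintro rfl; simp_all
  refine ⟨diag2 a ha₀, by simpa using diag2_smul_affinePoint ha₀ 0,
    diag2_smul_infinityPoint ha₀, ?_⟩
  rw [diag2_smul_affinePoint, ← ha, div_mul_cancel₀ s ht]

theorem exists_smul_pair_zero_infinity_eq_and_smul_eq
    (hF : ∀ d : F, d ≠ 0 → IsSquare d ∨ IsSquare (-d)) {p q : ℙ F (Fin 2 → F)}
    (hp : p ∉ ({affinePoint F 0, infinityPoint F} : Set _))
    (hq : q ∉ ({affinePoint F 0, infinityPoint F} : Set _)) :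
    ∃ g : SL(2, F), g • ({affinePoint F 0, infinityPoint F} : Set _) =
      {affinePoint F 0, infinityPoint F} ∧ g • p = q := by
  simp only [Set.mem_insert_iff, Set.mem_singleton_iff, not_or] at hp hq
  obtain ⟨t, rfl⟩ := exists_eq_affinePoint_of_ne_infinityPoint hp.2
  obtain ⟨s, rfl⟩ := exists_eq_affinePoint_of_ne_infinityPoint hq.2
  have ht : t ≠ 0 := by rintro rfl; exact hp.1 rfl
  have hs : s ≠ 0 := by rintro rfl; exact hq.1 rfl
  rcases hF (s / t) (div_ne_zero hs ht) with h | h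
  · obtain ⟨g, h0, hinf, hg⟩ := exists_smul_affinePoint_eq_of_isSquare_div hs ht h
    exact ⟨g, by simp [Set.smul_set_insert, h0, hinf], hg⟩
  · have h' : IsSquare (s / -t⁻¹) := by
      rw [show s / -t⁻¹ = -(s / t) * (t * t) by rw [div_neg, div_inv_eq_mul]; field_simp]
      exact h.mul (.mul_self t)
    obtain ⟨g, h0, hinf, hg⟩ :=
      exists_smul_affinePoint_eq_of_isSquare_div hs (neg_ne_zero.mpr (inv_ne_zero ht)) h'
    refine ⟨g * inversion F, ?_, ?_⟩
    · simp [Set.smul_set_insert, mul_smul, inversion_smul_affinePoint_zero,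
        inversion_smul_infinityPoint, h0, hinf, Set.pair_comm]
    · rw [mul_smul, inversion_smul_affinePoint ht, hg]

end ProjectiveLine

theorem FiniteField.isSquare_or_isSquare_neg {F : Type*} [Field F] [Fintype F]
    (hcard : Fintype.card F % 4 = 3) {d : F} (hd : d ≠ 0) : IsSquare d ∨ IsSquare (-d) := by
  classical
  refine or_iff_not_imp_left.mpr fun h ↦ ?_
  have hneg : ¬IsSquare (-1 : F) := by simp [FiniteField.isSquare_neg_one_iff, hcard]
  rw [← quadraticChar_one_iff_isSquare (neg_ne_zero.mpr hd), neg_eq_neg_one_mul, map_mul,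
    quadraticChar_neg_one_iff_not_isSquare.mpr hneg, quadraticChar_neg_one_iff_not_isSquare.mpr h]
  norm_num

theorem sl2ProjAction_eq_smul {F : Type} [Field F] (g : SL(2, F)) :
    sl2ProjAction g = (g • ·) := rfl

theorem psl2_q3mod4_transitive_general (F : Type) [Field F] [Fintype F]
    (hq : Fintype.card F % 4 = 3)
    (A B : Fin 3 → Set (ℙ F (Fin 2 → F)))
    (hAdisj : ∀ i j, i ≠ j → Disjoint (A i) (A j))
    (hBdisj : ∀ i j, i ≠ j → Disjoint (B i) (B j))
    (hAunion : (⋃ i, A i) = Set.univ) (hBunion : (⋃ i, B i) = Set.univ)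
    (hA1 : (A 1).ncard = 2) (hB1 : (B 1).ncard = 2)
    (hA2 : (A 2).ncard = 1) (hB2 : (B 2).ncard = 1) :
    ∃ g : Matrix.SpecialLinearGroup (Fin 2) F,
      ∀ i, sl2ProjAction g '' A i = B i := by
  obtain ⟨a₁, a₂, ha, hA₁⟩ := Set.ncard_eq_two.mp hA1
  obtain ⟨a₃, hA₂⟩ := Set.ncard_eq_one.mp hA2
  obtain ⟨b₁, b₂, hb, hB₁⟩ := Set.ncard_eq_two.mp hB1
  obtain ⟨b₃, hB₂⟩ := Set.ncard_eq_one.mp hB2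
  have ha₃ : a₃ ∉ ({a₁, a₂} : Set _) :=
    hA₁ ▸ (hAdisj 2 1 (by decide)).notMem_of_mem_left (hA₂ ▸ rfl)
  have hb₃ : b₃ ∉ ({b₁, b₂} : Set _) :=
    hB₁ ▸ (hBdisj 2 1 (by decide)).notMem_of_mem_left (hB₂ ▸ rfl)
  obtain ⟨g, hg₁, hg₂⟩ := exists_smul_pair_eq_and_smul_eq (G := SL(2, F))
    affinePoint_zero_ne_infinityPoint
    (fun _ _ ↦ exists_smul_pair_zero_infinity_eq_and_smul_eq
      fun _ ↦ FiniteField.isSquare_or_isSquare_neg hq) ha hb ha₃ hb₃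
  simp only [sl2ProjAction_eq_smul, Set.image_smul]
  refine ⟨g, smul_eq_of_partition hAdisj hBdisj hAunion hBunion ?_ ?_⟩
  · rw [hA₁, hB₁, hg₁]
  · rw [hA₂, hB₂, Set.smul_set_singleton, hg₂]

/-- For a prime power `q ≡ 3 (mod 4)`, the action of `SL₂(F_q)` (equivalently of
`PSL₂(F_q)`) on the projective line `ℙ¹(F_q)` is `(q-2,2,1)`-transitive: any ordered
set partition of `ℙ¹(F_q)` into parts of sizes `q-2`, `2`, `1` can be carried to any
other such partition by the action of some `g ∈ SL₂(F_q)`. -/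
theorem psl2_q3mod4_transitive (F : Type) [Field F] [Fintype F]
    (hq : Fintype.card F % 4 = 3)
    (A B : Fin 3 → Set (ℙ F (Fin 2 → F)))
    (hAdisj : ∀ i j, i ≠ j → Disjoint (A i) (A j))
    (hBdisj : ∀ i j, i ≠ j → Disjoint (B i) (B j))
    (hAunion : (⋃ i, A i) = Set.univ) (hBunion : (⋃ i, B i) = Set.univ)
    (hA0 : (A 0).ncard = Fintype.card F - 2) (hB0 : (B 0).ncard = Fintype.card F - 2)
    (hA1 : (A 1).ncard = 2) (hB1 : (B 1).ncard = 2)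
    (hA2 : (A 2).ncard = 1) (hB2 : (B 2).ncard = 1) :
    ∃ g : Matrix.SpecialLinearGroup (Fin 2) F,
      ∀ i, sl2ProjAction g '' A i = B i :=
  psl2_q3mod4_transitive_general F hq A B hAdisj hBdisj hAunion hBunion hA1 hB1 hA2 hB2
end
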